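/- arXiv:1203.0662 — 7 statements merged into one kernel-verified Lean document; each statement's English description precedes it below -/
import Mathlib

section
/- Let S and T be dependent 3-cutsets of G. Then |S ∩ T| ≤ 1, and moreover each of the graphs G − S and G − T has at most 3 connected components. -/
namespace Paper

variable {V : Type*}

/-- `S ⊆ V(G)` is a cutset of `G`: the graph `G − S` is disconnected. -/
def IsCutset (G : SimpleGraph V) (S : Set V) : Prop :=
  ¬ (G.induce (Sᶜ : Set V)).Connected

/-- A 3-cutset: a cutset of exactly 3 vertices. -/
def IsThreeCutset (G : SimpleGraph V) (S : Set V) : Prop :=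
  S.ncard = 3 ∧ IsCutset G S

/-- `G` is triconnected: at least 4 vertices and deleting any at most 2 vertices
leaves a connected graph. -/
def IsTriconnected [Fintype V] (G : SimpleGraph V) : Prop :=
  4 ≤ Fintype.card V ∧
    ∀ X : Set V, X.ncard ≤ 2 → (G.induce (Xᶜ : Set V)).Connected

/-- `x` and `y` both survive the deletion of `R` and lie in the same connected
component of `G − R`. -/
def ReachOutside (G : SimpleGraph V) (R : Set V) (x y : V) : Prop :=
  ∃ (hx : x ∈ (Rᶜ : Set V)) (hy : y ∈ (Rᶜ : Set V)),
    (G.induce (Rᶜ : Set V)).Reachable ⟨x, hx⟩ ⟨y, hy⟩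

/-- `R` splits `X`: two vertices of `X \ R` lie in different connected components
of `G − R`. -/
def Splits (G : SimpleGraph V) (R X : Set V) : Prop :=
  ∃ x ∈ X, ∃ y ∈ X, x ∉ R ∧ y ∉ R ∧ ¬ ReachOutside G R x y

/-- Two 3-cutsets are dependent iff one splits the other. -/
def Dependent (G : SimpleGraph V) (S T : Set V) : Prop :=
  Splits G S T ∨ Splits G T S

/-- The connected component of `G − R` containing `u` (empty if `u ∈ R`). -/
def compOutside (G : SimpleGraph V) (R : Set V) (u : V) : Set V :=
  {y | ReachOutside G R u y}

/-- `C` is a connected component of `G − R`. -/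
def IsCompOutside (G : SimpleGraph V) (R : Set V) (C : Set V) : Prop :=
  ∃ u, u ∉ R ∧ C = compOutside G R u

/-
Since `G` is triconnected, every vertex of a 3-cutset `S` has a neighbour in every component
of `G − S`. So if some component `C` of `G − S` misses `T`, then `C` links all of `S \ T` in
`G − T`, i.e. `T` does not split `S`. Hence a `T` splitting `S` meets every component of
`G − S`, and there are at most `|T| = 3` of them. The same argument makes splitting symmetric:
if `T` does not split `S`, then `S \ T` lies in one component of `G − T`, any other component
misses `S`, and so `S` does not split `T`. Finally, if `S` splits `T`, two vertices of `T` lie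
outside `S`.
-/

section ReachOutside

variable {G : SimpleGraph V} {R : Set V} {x y z : V}

lemma reachOutside_refl (hx : x ∉ R) : ReachOutside G R x x := ⟨hx, hx, .refl _⟩

lemma ReachOutside.symm (h : ReachOutside G R x y) : ReachOutside G R y x :=
  let ⟨hx, hy, hr⟩ := h
  ⟨hy, hx, hr.symm⟩

lemma ReachOutside.trans (h : ReachOutside G R x y) (h' : ReachOutside G R y z) :
    ReachOutside G R x z :=
  let ⟨hx, _, hr⟩ := h
  let ⟨_, hz, hr'⟩ := h'
  ⟨hx, hz, hr.trans hr'⟩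

lemma reachOutside_of_adj (h : G.Adj x y) (hx : x ∉ R) (hy : y ∉ R) :
    ReachOutside G R x y :=
  ⟨hx, hy, SimpleGraph.Adj.reachable (by simpa using h)⟩

end ReachOutside

variable {G : SimpleGraph V}

lemma mem_of_reachable_induce {A C : Set V} {a b : A}
    (h : (G.induce A).Reachable a b) (ha : (a : V) ∈ C)
    (hC : ∀ x ∈ C, ∀ y ∈ A, G.Adj x y → y ∈ C) : (b : V) ∈ C := by
  obtain ⟨p⟩ := h
  by_contra hb
  obtain ⟨d, -, hd, hd'⟩ := p.exists_boundary_dart {x | (x : V) ∈ C} ha hb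
  exact hd' (hC _ hd _ d.snd.2 (by simpa using d.adj))

lemma ReachOutside.of_disjoint {S T : Set V} {u v : V} (hT : Disjoint (compOutside G S u) T)
    (h : ReachOutside G S u v) : ReachOutside G T u v := by
  obtain ⟨hu, _, hr⟩ := h
  refine (mem_of_reachable_induce hr (C := {x | ReachOutside G S u x ∧ ReachOutside G T u x})
    ⟨reachOutside_refl hu, reachOutside_refl (Set.disjoint_left.1 hT (reachOutside_refl hu))⟩
    ?_).2
  rintro x ⟨hSx, hTx⟩ y hy hxy
  have hSy := hSx.trans (reachOutside_of_adj hxy hSx.2.1 hy)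
  exact ⟨hSy, hTx.trans (reachOutside_of_adj hxy hTx.2.1 (Set.disjoint_left.1 hT hSy))⟩

lemma exists_adj_mem_compOutside {S : Set V} {s u w : V}
    (hconn : (G.induce (S \ {s})ᶜ).Connected) (hu : u ∉ S) (hw : w ∉ S)
    (huw : ¬ ReachOutside G S u w) : ∃ c ∈ compOutside G S u, G.Adj s c := by
  by_contra! hs
  have hreach := hconn.preconnected ⟨u, fun h => hu h.1⟩ ⟨w, fun h => hw h.1⟩
  refine huw (mem_of_reachable_induce (C := compOutside G S u) hreach (reachOutside_refl hu) ?_)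
  intro x hx y hy hxy
  have hys : y ≠ s := by rintro rfl; exact hs x hx hxy.symm
  exact ReachOutside.trans hx (reachOutside_of_adj hxy hx.2.1 fun hyS => hy ⟨hyS, hys⟩)

lemma IsCutset.exists_not_reachOutside {T : Set V} {x : V} (hT : IsCutset G T) (hx : x ∉ T) :
    ∃ y ∉ T, ¬ ReachOutside G T x y := by
  by_contra! h
  have hpre : (G.induce Tᶜ).Preconnected := fun a b =>
    let ⟨_, _, ha⟩ := h a a.2
    let ⟨_, _, hb⟩ := h b b.2
    ha.symm.trans hb
  exact hT ((SimpleGraph.connected_iff _).2 ⟨hpre, ⟨⟨x, hx⟩⟩⟩)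

lemma not_splits_of_disjoint_compOutside {S T : Set V} {u w : V}
    (hmin : ∀ s ∈ S, (G.induce (S \ {s})ᶜ).Connected) (hu : u ∉ S) (hw : w ∉ S)
    (huw : ¬ ReachOutside G S u w) (hT : Disjoint (compOutside G S u) T) :
    ¬ Splits G T S := by
  have reach_u : ∀ s ∈ S, s ∉ T → ReachOutside G T s u := by
    intro s hs hsT
    obtain ⟨c, hc, hsc⟩ := exists_adj_mem_compOutside (hmin s hs) hu hw huw
    exact (reachOutside_of_adj hsc hsT (Set.disjoint_left.1 hT hc)).trans
      (hc.of_disjoint hT).symm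
  rintro ⟨x, hx, y, hy, hxT, hyT, hxy⟩
  exact hxy ((reach_u x hx hxT).trans (reach_u y hy hyT).symm)

lemma Splits.splits_of_mem_sdiff {S T : Set V} {s : V}
    (hmin : ∀ t ∈ T, (G.induce (T \ {t})ᶜ).Connected) (hT : IsCutset G T) (hs : s ∈ S)
    (hsT : s ∉ T) (h : Splits G S T) : Splits G T S := by
  by_contra hTS
  obtain ⟨u, hu, hsu⟩ := hT.exists_not_reachOutside hsT
  refine not_splits_of_disjoint_compOutside hmin hu hsT (fun h => hsu h.symm) ?_ h
  refine Set.disjoint_left.2 fun v hv hvS => hsu ((?_ : ReachOutside G T s v).trans hv.symm)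
  by_contra hsv
  exact hTS ⟨s, hs, v, hvS, hsT, hv.2.1, hsv⟩

lemma Splits.ncard_inter_add_two_le {S T : Set V} (hT : T.Finite) (h : Splits G S T) :
    (S ∩ T).ncard + 2 ≤ T.ncard := by
  obtain ⟨x, hx, y, hy, hxS, hyS, hxy⟩ := h
  have hne : x ≠ y := by rintro rfl; exact hxy (reachOutside_refl hxS)
  have h2 : 2 ≤ (T \ S).ncard := by
    rw [← Set.ncard_pair hne]
    exact Set.ncard_le_ncard (Set.pair_subset ⟨hx, hxS⟩ ⟨hy, hyS⟩) hT.sdiff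
  rw [Set.inter_comm, ← Set.ncard_inter_add_ncard_sdiff_eq_ncard T S hT]
  omega

lemma IsTriconnected.connected_induce_compl_sdiff_singleton [Fintype V]
    (htri : IsTriconnected G) {S : Set V} (hS : S.ncard ≤ 3) :
    ∀ s ∈ S, (G.induce (S \ {s})ᶜ).Connected := fun s hs =>
  htri.2 _ (by rw [Set.ncard_sdiff_singleton_of_mem hs]; omega)

lemma Splits.symm [Fintype V] (htri : IsTriconnected G) {S T : Set V} (hS : S.ncard = 3)
    (hT : IsThreeCutset G T) (h : Splits G S T) : Splits G T S := by
  obtain ⟨s, hs, hsT⟩ : ∃ s ∈ S, s ∉ T := by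
    by_contra! hST
    have := h.ncard_inter_add_two_le T.toFinite
    rw [Set.inter_eq_left.2 hST, hS, hT.1] at this
    omega
  exact h.splits_of_mem_sdiff (htri.connected_induce_compl_sdiff_singleton hT.1.le) hT.2 hs hsT

lemma exists_compOutside_disjoint_of_ncard_lt {S T : Set V} (hT : T.Finite)
    (hlt : T.ncard < Nat.card (G.induce Sᶜ).ConnectedComponent) :
    ∃ u ∉ S, Disjoint (compOutside G S u) T := by
  set H := G.induce Sᶜ
  set P : Set (Sᶜ : Set V) := Subtype.val ⁻¹' T
  obtain ⟨K, hK⟩ : ∃ K, K ∉ H.connectedComponentMk '' P := by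
    by_contra! hall
    have hP : P.Finite := hT.preimage Subtype.val_injective.injOn
    have : Nat.card H.ConnectedComponent ≤ T.ncard := calc
      Nat.card H.ConnectedComponent = (H.connectedComponentMk '' P).ncard := by
        rw [Set.eq_univ_of_forall hall, Set.ncard_univ]
      _ ≤ P.ncard := Set.ncard_image_le hP
      _ = (Subtype.val '' P).ncard := (Set.ncard_image_of_injective _ Subtype.val_injective).symm
      _ ≤ T.ncard := Set.ncard_le_ncard (Set.image_preimage_subset _ _) hT
    omega
  obtain ⟨u, rfl⟩ := K.exists_rep
  exact ⟨u, u.2, Set.disjoint_left.2 fun v ⟨_, hv, hr⟩ hvT =>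
    hK ⟨⟨v, hv⟩, hvT, (SimpleGraph.ConnectedComponent.sound hr).symm⟩⟩

lemma card_connectedComponent_le_ncard_of_splits {S T : Set V}
    (hmin : ∀ s ∈ S, (G.induce (S \ {s})ᶜ).Connected) (hS : IsCutset G S) (hT : T.Finite)
    (h : Splits G T S) : Nat.card (G.induce Sᶜ).ConnectedComponent ≤ T.ncard := by
  by_contra! hlt
  obtain ⟨u, hu, hdisj⟩ := exists_compOutside_disjoint_of_ncard_lt hT hlt
  obtain ⟨w, hw, huw⟩ := hS.exists_not_reachOutside hu
  exact not_splits_of_disjoint_compOutside hmin hu hw huw hdisj h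

theorem stmt_0_general [Fintype V] (G : SimpleGraph V)
    (htri : IsTriconnected G)
    (S T : Set V) (hS : IsThreeCutset G S) (hT : IsThreeCutset G T)
    (hdep : Dependent G S T) :
    (S ∩ T).ncard ≤ 1 ∧
      Nat.card (G.induce (Sᶜ : Set V)).ConnectedComponent ≤ 3 ∧
      Nat.card (G.induce (Tᶜ : Set V)).ConnectedComponent ≤ 3 := by
  obtain ⟨hST, hTS⟩ : Splits G S T ∧ Splits G T S := by
    rcases hdep with h | h
    exacts [⟨h, h.symm htri hS.1 hT⟩, ⟨h.symm htri hT.1 hS, h⟩]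
  have hminS := htri.connected_induce_compl_sdiff_singleton hS.1.le
  have hminT := htri.connected_induce_compl_sdiff_singleton hT.1.le
  refine ⟨?_, ?_, ?_⟩
  · have := hST.ncard_inter_add_two_le T.toFinite
    rw [hT.1] at this
    omega
  · exact hT.1 ▸ card_connectedComponent_le_ncard_of_splits hminS hS.2 T.toFinite hTS
  · exact hS.1 ▸ card_connectedComponent_le_ncard_of_splits hminT hT.2 S.toFinite hST

/-- Corollary 1: dependent 3-cutsets intersect in at most one vertex and each
splits the graph into at most 3 connected components. -/
theorem stmt_0 [Fintype V] (G : SimpleGraph V)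
    (htri : IsTriconnected G) (hbig : 6 < Fintype.card V)
    (S T : Set V) (hS : IsThreeCutset G S) (hT : IsThreeCutset G T)
    (hdep : Dependent G S T) :
    (S ∩ T).ncard ≤ 1 ∧
      Nat.card (G.induce (Sᶜ : Set V)).ConnectedComponent ≤ 3 ∧
      Nat.card (G.induce (Tᶜ : Set V)).ConnectedComponent ≤ 3 :=
  stmt_0_general G htri S T hS hT hdep

end Paper
end

section
/- Let M ∈ 𝔐_2(G) be a cut consisting of exactly one vertex and two edges. Then there exists at most one edge of G which complements M. -/
namespace Paper

variable {V : Type*}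

/-- The graph obtained from `G` by deleting the vertices of `A` (with all incident
edges) and the edges of `E`. -/
def DelVE (G : SimpleGraph V) (A : Set V) (E : Set (Sym2 V)) : SimpleGraph (Aᶜ : Set V) :=
  (G.deleteEdges E).induce (Aᶜ : Set V)

/-- The mixed set of vertices `A` and edges `E` disconnects `G`. -/
def CutVE (G : SimpleGraph V) (A : Set V) (E : Set (Sym2 V)) : Prop :=
  ¬ (DelVE G A E).Connected

/-- `x` and `y` survive the deletion and lie in the same connected component of
the graph obtained by deleting the vertices of `A` and the edges of `E`. -/
def ReachVE (G : SimpleGraph V) (A : Set V) (E : Set (Sym2 V)) (x y : V) : Prop :=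
  ∃ (hx : x ∈ (Aᶜ : Set V)) (hy : y ∈ (Aᶜ : Set V)),
    (DelVE G A E).Reachable ⟨x, hx⟩ ⟨y, hy⟩

/-- The connected component of `G − (A ∪ E)` containing `u`. -/
def compVE (G : SimpleGraph V) (A : Set V) (E : Set (Sym2 V)) (u : V) : Set V :=
  {y | ReachVE G A E u y}

/-- `C` is a connected component of the graph obtained from `G` by deleting the
vertices of `A` and the edges of `E`. -/
def IsCompVE (G : SimpleGraph V) (A : Set V) (E : Set (Sym2 V)) (C : Set V) : Prop :=
  ∃ u, u ∉ A ∧ C = compVE G A E u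


open SimpleGraph in
private lemma reach_stays {G : SimpleGraph V} {X S : Set V}
    (hcl : ∀ a b : V, a ∈ S → a ∉ X → b ∉ X → G.Adj a b → b ∈ S) :
    ∀ {u v : (Xᶜ : Set V)}, (G.induce (Xᶜ : Set V)).Reachable u v → u.1 ∈ S → v.1 ∈ S := by
  intro u v h
  obtain ⟨w⟩ := h
  induction w with
  | nil => exact id
  | @cons a b c h p ih =>
      intro ha
      exact ih (hcl a.1 b.1 ha a.2 b.2 h)

private lemma bdry_card [Fintype V] {G : SimpleGraph V} {S : Set V} {f₁ f₂ : Sym2 V}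
    (hcross : ∀ a b, G.Adj a b → a ∈ S → b ∉ S → s(a, b) = f₁ ∨ s(a, b) = f₂)
    {u : V} :
    ({a | a ∈ S ∧ ∃ b, b ∉ S ∧ G.Adj a b} : Set V).ncard ≤ 2 := by
  classical
  set u₁ : V := if h : ∃ a b, a ∈ S ∧ b ∉ S ∧ G.Adj a b ∧ s(a, b) = f₁ then
    h.choose else u with hu₁
  set u₂ : V := if h : ∃ a b, a ∈ S ∧ b ∉ S ∧ G.Adj a b ∧ s(a, b) = f₂ then
    h.choose else u with hu₂
  have hsub : {a | a ∈ S ∧ ∃ b, b ∉ S ∧ G.Adj a b} ⊆ {u₁, u₂} := by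
    rintro a ⟨haS, b, hbS, hadj⟩
    rcases hcross a b hadj haS hbS with hf | hf
    · left
      have hex : ∃ a b, a ∈ S ∧ b ∉ S ∧ G.Adj a b ∧ s(a, b) = f₁ := ⟨a, b, haS, hbS, hadj, hf⟩
      obtain ⟨b₀, ha₀, hb₀, hadj₀, hf₀⟩ := hex.choose_spec
      have h := hf.trans hf₀.symm
      rcases Sym2.eq_iff.mp h with ⟨h1, _⟩ | ⟨h1, _⟩
      · rw [hu₁, dif_pos hex]; exact h1
      · exact absurd (h1 ▸ haS) hb₀
    · right
      have hex : ∃ a b, a ∈ S ∧ b ∉ S ∧ G.Adj a b ∧ s(a, b) = f₂ := ⟨a, b, haS, hbS, hadj, hf⟩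
      obtain ⟨b₀, ha₀, hb₀, hadj₀, hf₀⟩ := hex.choose_spec
      have h := hf.trans hf₀.symm
      rcases Sym2.eq_iff.mp h with ⟨h1, _⟩ | ⟨h1, _⟩
      · rw [hu₂, dif_pos hex]; exact h1
      · exact absurd (h1 ▸ haS) hb₀
  refine le_trans (Set.ncard_le_ncard hsub (Set.toFinite _)) ?_
  exact le_trans (Set.ncard_insert_le _ _) (by simp [Set.ncard_singleton])

private lemma no_two_edge_sep' [Fintype V] {G : SimpleGraph V}
    (htri : IsTriconnected G) {S : Set V} {f₁ f₂ : Sym2 V}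
    (hcross : ∀ a b, G.Adj a b → a ∈ S → b ∉ S → s(a, b) = f₁ ∨ s(a, b) = f₂)
    {u : V} (hu : u ∈ S) (hub : ∀ b, b ∉ S → ¬ G.Adj u b)
    {v : V} (hv : v ∉ S) : False := by
  classical
  have hcard := bdry_card (G := G) (S := S) hcross (u := u)
  have hconn := htri.2 _ hcard
  have huX : u ∉ {a | a ∈ S ∧ ∃ b, b ∉ S ∧ G.Adj a b} := by
    rintro ⟨-, b, hbS, hadj⟩; exact hub b hbS hadj
  have hvX : v ∉ {a | a ∈ S ∧ ∃ b, b ∉ S ∧ G.Adj a b} := by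
    rintro ⟨hvS, -⟩; exact hv hvS
  have hcl : ∀ a b : V, a ∈ S → a ∉ {a | a ∈ S ∧ ∃ b, b ∉ S ∧ G.Adj a b} →
      b ∉ {a | a ∈ S ∧ ∃ b, b ∉ S ∧ G.Adj a b} → G.Adj a b → b ∈ S := by
    intro a b haS haX _ hadj
    by_contra hbS
    exact haX ⟨haS, b, hbS, hadj⟩
  exact hv (reach_stays hcl (hconn.preconnected ⟨u, huX⟩ ⟨v, hvX⟩) hu)

private lemma no_two_edge_sep [Fintype V] {G : SimpleGraph V}
    (htri : IsTriconnected G) (hbig : 6 < Fintype.card V) {S : Set V}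
    (hS : S.Nonempty) (hSc : Sᶜ.Nonempty) {f₁ f₂ : Sym2 V}
    (hcross : ∀ a b, G.Adj a b → a ∈ S → b ∉ S → s(a, b) = f₁ ∨ s(a, b) = f₂) : False := by
  classical
  obtain ⟨v, hv⟩ := hSc
  obtain ⟨w, hw⟩ := hS
  have hcross' : ∀ a b, G.Adj a b → a ∈ Sᶜ → b ∉ Sᶜ → s(a, b) = f₁ ∨ s(a, b) = f₂ := by
    intro a b hadj ha hb
    have hb' : b ∈ S := not_not.mp hb
    rcases hcross b a hadj.symm hb' ha with hf | hf
    · exact Or.inl (Sym2.eq_swap.trans hf)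
    · exact Or.inr (Sym2.eq_swap.trans hf)
  by_cases h : ∃ u ∈ S, ∀ b, b ∉ S → ¬ G.Adj u b
  · obtain ⟨u, hu, hub⟩ := h
    exact no_two_edge_sep' htri hcross hu hub hv
  · by_cases h2 : ∃ u ∈ Sᶜ, ∀ b, b ∉ Sᶜ → ¬ G.Adj u b
    · obtain ⟨u, hu, hub⟩ := h2
      exact no_two_edge_sep' htri hcross' hu hub (by simpa using hw)
    · push_neg at h h2
      have hsub1 : S ⊆ {a | a ∈ S ∧ ∃ b, b ∉ S ∧ G.Adj a b} := by
        intro a ha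
        obtain ⟨b, hb, hadj⟩ := h a ha
        exact ⟨ha, b, hb, hadj⟩
      have hsub2 : Sᶜ ⊆ {a | a ∈ Sᶜ ∧ ∃ b, b ∉ Sᶜ ∧ G.Adj a b} := by
        intro a ha
        obtain ⟨b, hb, hadj⟩ := h2 a ha
        exact ⟨ha, b, hb, hadj⟩
      have hc1 : S.ncard ≤ 2 :=
        le_trans (Set.ncard_le_ncard hsub1 (Set.toFinite _)) (bdry_card hcross (u := v))
      have hc2 : Sᶜ.ncard ≤ 2 :=
        le_trans (Set.ncard_le_ncard hsub2 (Set.toFinite _)) (bdry_card hcross' (u := v))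
      have htot : S.ncard + Sᶜ.ncard = Fintype.card V := by
        rw [Set.ncard_add_ncard_compl, Nat.card_eq_fintype_card]
      omega

private lemma touch_aux [Fintype V] {G : SimpleGraph V} (htri : IsTriconnected G)
    (hbig : 6 < Fintype.card V) {S : Set V} (hS : S.Nonempty) (hSc : Sᶜ.Nonempty)
    {f g₁ g₂ : Sym2 V}
    (hcross : ∀ a b, G.Adj a b → a ∈ S → b ∉ S →
      s(a, b) = f ∨ s(a, b) = g₁ ∨ s(a, b) = g₂)
    (hnot : ∀ a b, G.Adj a b → a ∈ S → b ∉ S → s(a, b) ≠ f) : False :=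
  no_two_edge_sep htri hbig hS hSc (f₁ := g₁) (f₂ := g₂) (fun a b hadj ha hb =>
    (hcross a b hadj ha hb).resolve_left (hnot a b hadj ha hb))

private lemma cover_aux {H K : SimpleGraph V} {x y : V}
    (hK : ∀ a b, H.Adj a b → K.Adj a b ∨ s(a, b) = s(x, y)) :
    ∀ {u v : V}, H.Walk u v → (K.Reachable x u ∨ K.Reachable y u) →
      (K.Reachable x v ∨ K.Reachable y v) := by
  intro u v w
  induction w with
  | nil => exact id
  | @cons a b c h p ih =>
      intro hu
      apply ih
      rcases hK _ _ h with hadj | heq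
      · rcases hu with h1 | h1
        · exact Or.inl (h1.trans hadj.reachable)
        · exact Or.inr (h1.trans hadj.reachable)
      · rcases Sym2.eq_iff.mp heq with ⟨h1, h2⟩ | ⟨h1, h2⟩
        · exact Or.inr (h2 ▸ SimpleGraph.Reachable.refl b)
        · exact Or.inl (h2 ▸ SimpleGraph.Reachable.refl b)

private lemma switch_aux {G₁ G₂ : SimpleGraph V} {x y : V}
    (h : ∀ a b, G₁.Adj a b → a ≠ x → b ≠ x → G₂.Adj a b)
    (hnx : ¬ G₁.Reachable y x) :
    ∀ {u v : V}, G₁.Walk u v → G₁.Reachable y u → G₂.Reachable y u → G₂.Reachable y v := by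
  intro u v w
  induction w with
  | nil => exact fun _ h2 => h2
  | @cons a b c h' p ih =>
      intro h1 h2
      have hyb : G₁.Reachable y b := h1.trans h'.reachable
      have ha : a ≠ x := fun e => hnx (e ▸ h1)
      have hb : b ≠ x := fun e => hnx (e ▸ hyb)
      exact ih hyb (h2.trans (h a b h' ha hb).reachable)

private lemma cutVE_empty {G : SimpleGraph V} {E : Set (Sym2 V)}
    (h : CutVE G (∅ : Set V) E) : ¬ (G.deleteEdges E).Connected := by
  intro hc
  rw [CutVE, DelVE, Set.compl_empty] at h
  exact h (((G.deleteEdges E).induceUnivIso).connected_iff.mpr hc)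


/-- Corollary `ll31c1`: a cut with one vertex and two edges can be complemented
by at most one edge. -/
theorem stmt_5 [Fintype V] (G : SimpleGraph V)
    (htri : IsTriconnected G) (hbig : 6 < Fintype.card V)
    (x : V) (e₁ e₂ : Sym2 V) (hne : e₁ ≠ e₂)
    (he₁ : e₁ ∈ G.edgeSet) (he₂ : e₂ ∈ G.edgeSet)
    (hcut : CutVE G {x} {e₁, e₂}) :
    ∀ y z : V, G.Adj x y → G.Adj x z →
      CutVE G (∅ : Set V) {e₁, e₂, s(x, y)} →
      CutVE G (∅ : Set V) {e₁, e₂, s(x, z)} → y = z := by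
  classical
  intro y z hxy hxz hc₁ hc₂
  by_contra hyz
  have hV : Nonempty V := Fintype.card_pos_iff.mp (by omega)
  have hnc₁ : ¬ (G.deleteEdges {e₁, e₂, s(x, y)}).Connected := cutVE_empty hc₁
  have hnc₂ : ¬ (G.deleteEdges {e₁, e₂, s(x, z)}).Connected := cutVE_empty hc₂
  -- `G` minus the two edges `e₁, e₂` is connected
  have hH : (G.deleteEdges {e₁, e₂}).Connected := by
    rw [SimpleGraph.connected_iff]
    refine ⟨?_, hV⟩
    by_contra hpre
    simp only [SimpleGraph.Preconnected] at hpre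
    push_neg at hpre
    obtain ⟨a, b, hab⟩ := hpre
    refine no_two_edge_sep htri hbig
      (S := {w | (G.deleteEdges {e₁, e₂}).Reachable a w})
      ⟨a, SimpleGraph.Reachable.refl a⟩ ⟨b, hab⟩ (f₁ := e₁) (f₂ := e₂) ?_
    intro p q hadj hp hq
    by_contra hne'
    push_neg at hne'
    have hpq : (G.deleteEdges {e₁, e₂}).Adj p q := by
      rw [SimpleGraph.deleteEdges_adj]
      refine ⟨hadj, ?_⟩
      simp only [Set.mem_insert_iff, Set.mem_singleton_iff]
      push_neg
      exact hne'
    exact hq (hp.trans hpq.reachable)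
  have hxy' : x ≠ y := hxy.ne
  have hxz' : x ≠ z := hxz.ne
  have hsyz : s(x, y) ≠ s(x, z) := fun h => hyz (Sym2.congr_right.mp h)
  -- the complementing edges are distinct from `e₁, e₂`
  have hdist : ∀ w : V, G.Adj x w →
      ¬ (G.deleteEdges {e₁, e₂, s(x, w)}).Connected → s(x, w) ≠ e₁ ∧ s(x, w) ≠ e₂ := by
    intro w hadj hnc
    constructor <;> intro hcon <;> apply hnc <;>
      [ (have hset : ({e₁, e₂, s(x, w)} : Set (Sym2 V)) = {e₁, e₂} := by
          ext m; simp only [Set.mem_insert_iff, Set.mem_singleton_iff, hcon]; tauto);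
        (have hset : ({e₁, e₂, s(x, w)} : Set (Sym2 V)) = {e₁, e₂} := by
          ext m; simp only [Set.mem_insert_iff, Set.mem_singleton_iff, hcon]; tauto)] <;>
      rw [hset] <;> exact hH
  obtain ⟨hxy₁, hxy₂⟩ := hdist y hxy hnc₁
  obtain ⟨hxz₁, hxz₂⟩ := hdist z hxz hnc₂
  have hG₁xz : (G.deleteEdges {e₁, e₂, s(x, y)}).Adj x z := by
    rw [SimpleGraph.deleteEdges_adj]
    refine ⟨hxz, ?_⟩
    simp only [Set.mem_insert_iff, Set.mem_singleton_iff]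
    push_neg
    exact ⟨hxz₁, hxz₂, hsyz.symm⟩
  have hG₂xy : (G.deleteEdges {e₁, e₂, s(x, z)}).Adj x y := by
    rw [SimpleGraph.deleteEdges_adj]
    refine ⟨hxy, ?_⟩
    simp only [Set.mem_insert_iff, Set.mem_singleton_iff]
    push_neg
    exact ⟨hxy₁, hxy₂, hsyz⟩
  -- every vertex is reachable from `x` or from the endpoint of the removed edge
  have hcov : ∀ w : V, G.Adj x w →
      ∀ v, (G.deleteEdges {e₁, e₂, s(x, w)}).Reachable x v ∨
        (G.deleteEdges {e₁, e₂, s(x, w)}).Reachable w v := by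
    intro w hadj v
    have hK : ∀ a b, (G.deleteEdges {e₁, e₂}).Adj a b →
        (G.deleteEdges {e₁, e₂, s(x, w)}).Adj a b ∨ s(a, b) = s(x, w) := by
      intro a b hab
      by_cases hs : s(a, b) = s(x, w)
      · exact Or.inr hs
      · left
        rw [SimpleGraph.deleteEdges_adj] at hab ⊢
        obtain ⟨hG, hm⟩ := hab
        simp only [Set.mem_insert_iff, Set.mem_singleton_iff] at hm ⊢
        push_neg at hm ⊢
        exact ⟨hG, hm.1, hm.2, hs⟩
    obtain ⟨p⟩ := hH.preconnected x v
    exact cover_aux hK p (Or.inl (SimpleGraph.Reachable.refl x))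
  have nr : ∀ w : V, G.Adj x w →
      ¬ (G.deleteEdges {e₁, e₂, s(x, w)}).Connected →
      ¬ (G.deleteEdges {e₁, e₂, s(x, w)}).Reachable x w := by
    intro w hadj hnc h
    apply hnc
    rw [SimpleGraph.connected_iff]
    refine ⟨fun u v => ?_, hV⟩
    have hu : (G.deleteEdges {e₁, e₂, s(x, w)}).Reachable x u :=
      (hcov w hadj u).elim id fun h' => h.trans h'
    have hv : (G.deleteEdges {e₁, e₂, s(x, w)}).Reachable x v :=
      (hcov w hadj v).elim id fun h' => h.trans h'
    exact hu.symm.trans hv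
  have nr₁ : ¬ (G.deleteEdges {e₁, e₂, s(x, y)}).Reachable x y := nr y hxy hnc₁
  have nr₂ : ¬ (G.deleteEdges {e₁, e₂, s(x, z)}).Reachable x z := nr z hxz hnc₂
  have hxK : ¬ (G.deleteEdges {e₁, e₂, s(x, y)}).Reachable y x := fun h => nr₁ h.symm
  have hxL : ¬ (G.deleteEdges {e₁, e₂, s(x, z)}).Reachable z x := fun h => nr₂ h.symm
  -- reachability from `y` avoiding `x` transfers between the two deleted graphs
  have hsw : ∀ a b, (G.deleteEdges {e₁, e₂, s(x, y)}).Adj a b → a ≠ x → b ≠ x →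
      (G.deleteEdges {e₁, e₂, s(x, z)}).Adj a b := by
    intro a b hab ha hb
    rw [SimpleGraph.deleteEdges_adj] at hab ⊢
    obtain ⟨hG, hm⟩ := hab
    refine ⟨hG, ?_⟩
    simp only [Set.mem_insert_iff, Set.mem_singleton_iff] at hm ⊢
    push_neg at hm ⊢
    refine ⟨hm.1, hm.2.1, ?_⟩
    intro hcon
    rcases Sym2.eq_iff.mp hcon with ⟨h1, _⟩ | ⟨_, h2⟩
    exacts [ha h1, hb h2]
  -- the component of `y` and the component of `z` are disjoint
  have disj : ∀ w, (G.deleteEdges {e₁, e₂, s(x, y)}).Reachable y w →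
      (G.deleteEdges {e₁, e₂, s(x, z)}).Reachable z w → False := by
    intro w h1 h2
    have h1' : (G.deleteEdges {e₁, e₂, s(x, z)}).Reachable y w := by
      obtain ⟨p⟩ := h1
      exact switch_aux hsw hxK p (SimpleGraph.Reachable.refl y) (SimpleGraph.Reachable.refl y)
    exact nr₂ (hG₂xy.reachable.trans (h1'.trans h2.symm))
  -- crossing edges of the two components
  have hcrossK : ∀ a b, G.Adj a b → (G.deleteEdges {e₁, e₂, s(x, y)}).Reachable y a →
      ¬ (G.deleteEdges {e₁, e₂, s(x, y)}).Reachable y b →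
      s(a, b) = e₁ ∨ s(a, b) = e₂ ∨ s(a, b) = s(x, y) := by
    intro a b hadj ha hb
    by_contra hc
    push_neg at hc
    apply hb
    refine ha.trans (SimpleGraph.Adj.reachable ?_)
    rw [SimpleGraph.deleteEdges_adj]
    refine ⟨hadj, ?_⟩
    simp only [Set.mem_insert_iff, Set.mem_singleton_iff]
    push_neg
    exact hc
  have hcrossL : ∀ a b, G.Adj a b → (G.deleteEdges {e₁, e₂, s(x, z)}).Reachable z a →
      ¬ (G.deleteEdges {e₁, e₂, s(x, z)}).Reachable z b →
      s(a, b) = e₁ ∨ s(a, b) = e₂ ∨ s(a, b) = s(x, z) := by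
    intro a b hadj ha hb
    by_contra hc
    push_neg at hc
    apply hb
    refine ha.trans (SimpleGraph.Adj.reachable ?_)
    rw [SimpleGraph.deleteEdges_adj]
    refine ⟨hadj, ?_⟩
    simp only [Set.mem_insert_iff, Set.mem_singleton_iff]
    push_neg
    exact hc
  -- each of `e₁, e₂` has an endpoint in the component of `y`
  have htouchK1 :
      ∃ a b, G.Adj a b ∧ (G.deleteEdges {e₁, e₂, s(x, y)}).Reachable y a ∧
        ¬ (G.deleteEdges {e₁, e₂, s(x, y)}).Reachable y b ∧ s(a, b) = e₁ := by
    by_contra hnot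
    push_neg at hnot
    exact touch_aux htri hbig (S := {w | (G.deleteEdges {e₁, e₂, s(x, y)}).Reachable y w})
      ⟨y, SimpleGraph.Reachable.refl y⟩ ⟨x, hxK⟩ (f := e₁) (g₁ := e₂) (g₂ := s(x, y))
      (fun a b hadj ha hb => hcrossK a b hadj ha hb)
      (fun a b hadj ha hb => hnot a b hadj ha hb)
  have htouchK2 :
      ∃ a b, G.Adj a b ∧ (G.deleteEdges {e₁, e₂, s(x, y)}).Reachable y a ∧
        ¬ (G.deleteEdges {e₁, e₂, s(x, y)}).Reachable y b ∧ s(a, b) = e₂ := by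
    by_contra hnot
    push_neg at hnot
    exact touch_aux htri hbig (S := {w | (G.deleteEdges {e₁, e₂, s(x, y)}).Reachable y w})
      ⟨y, SimpleGraph.Reachable.refl y⟩ ⟨x, hxK⟩ (f := e₂) (g₁ := e₁) (g₂ := s(x, y))
      (fun a b hadj ha hb => by
        rcases hcrossK a b hadj ha hb with h | h | h
        exacts [Or.inr (Or.inl h), Or.inl h, Or.inr (Or.inr h)])
      (fun a b hadj ha hb => hnot a b hadj ha hb)
  have htouchL1 :
      ∃ a b, G.Adj a b ∧ (G.deleteEdges {e₁, e₂, s(x, z)}).Reachable z a ∧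
        ¬ (G.deleteEdges {e₁, e₂, s(x, z)}).Reachable z b ∧ s(a, b) = e₁ := by
    by_contra hnot
    push_neg at hnot
    exact touch_aux htri hbig (S := {w | (G.deleteEdges {e₁, e₂, s(x, z)}).Reachable z w})
      ⟨z, SimpleGraph.Reachable.refl z⟩ ⟨x, hxL⟩ (f := e₁) (g₁ := e₂) (g₂ := s(x, z))
      (fun a b hadj ha hb => hcrossL a b hadj ha hb)
      (fun a b hadj ha hb => hnot a b hadj ha hb)
  have htouchL2 :
      ∃ a b, G.Adj a b ∧ (G.deleteEdges {e₁, e₂, s(x, z)}).Reachable z a ∧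
        ¬ (G.deleteEdges {e₁, e₂, s(x, z)}).Reachable z b ∧ s(a, b) = e₂ := by
    by_contra hnot
    push_neg at hnot
    exact touch_aux htri hbig (S := {w | (G.deleteEdges {e₁, e₂, s(x, z)}).Reachable z w})
      ⟨z, SimpleGraph.Reachable.refl z⟩ ⟨x, hxL⟩ (f := e₂) (g₁ := e₁) (g₂ := s(x, z))
      (fun a b hadj ha hb => by
        rcases hcrossL a b hadj ha hb with h | h | h
        exacts [Or.inr (Or.inl h), Or.inl h, Or.inr (Or.inr h)])
      (fun a b hadj ha hb => hnot a b hadj ha hb)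
  obtain ⟨p₁, q₁, hpq₁, hp₁K, hq₁K, hf₁⟩ := htouchK1
  obtain ⟨p₂, q₂, hpq₂, hp₂K, hq₂K, hf₂⟩ := htouchK2
  obtain ⟨a₁, b₁, hab₁, ha₁L, hb₁L, hg₁⟩ := htouchL1
  obtain ⟨a₂, b₂, hab₂, ha₂L, hb₂L, hg₂⟩ := htouchL2
  -- the other endpoints lie in the component of `z`
  have hq₁L : (G.deleteEdges {e₁, e₂, s(x, z)}).Reachable z q₁ := by
    rcases Sym2.eq_iff.mp (hg₁.trans hf₁.symm) with ⟨h1, h2⟩ | ⟨h1, h2⟩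
    · exact absurd (h1 ▸ ha₁L) (disj p₁ hp₁K)
    · exact h1 ▸ ha₁L
  have hq₂L : (G.deleteEdges {e₁, e₂, s(x, z)}).Reachable z q₂ := by
    rcases Sym2.eq_iff.mp (hg₂.trans hf₂.symm) with ⟨h1, h2⟩ | ⟨h1, h2⟩
    · exact absurd (h1 ▸ ha₂L) (disj p₂ hp₂K)
    · exact h1 ▸ ha₂L
  -- the union of the two components has only two crossing edges: contradiction
  refine no_two_edge_sep htri hbig
    (S := {w | (G.deleteEdges {e₁, e₂, s(x, y)}).Reachable y w ∨
      (G.deleteEdges {e₁, e₂, s(x, z)}).Reachable z w})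
    ⟨y, Or.inl (SimpleGraph.Reachable.refl y)⟩ ⟨x, ?_⟩
    (f₁ := s(x, y)) (f₂ := s(x, z)) ?_
  · rintro (h | h)
    exacts [hxK h, hxL h]
  · intro a b hadj ha hb
    simp only [Set.mem_setOf_eq] at ha hb
    push_neg at hb
    obtain ⟨hb1, hb2⟩ := hb
    rcases ha with haK | haL
    · rcases hcrossK a b hadj haK hb1 with h | h | h
      · exfalso
        rcases Sym2.eq_iff.mp (h.trans hf₁.symm) with ⟨_, h2⟩ | ⟨_, h2⟩
        · exact hb2 (h2 ▸ hq₁L)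
        · exact hb1 (h2 ▸ hp₁K)
      · exfalso
        rcases Sym2.eq_iff.mp (h.trans hf₂.symm) with ⟨_, h2⟩ | ⟨_, h2⟩
        · exact hb2 (h2 ▸ hq₂L)
        · exact hb1 (h2 ▸ hp₂K)
      · exact Or.inl h
    · rcases hcrossL a b hadj haL hb2 with h | h | h
      · exfalso
        rcases Sym2.eq_iff.mp (h.trans hf₁.symm) with ⟨_, h2⟩ | ⟨_, h2⟩
        · exact hb2 (h2 ▸ hq₁L)
        · exact hb1 (h2 ▸ hp₁K)
      · exfalso
        rcases Sym2.eq_iff.mp (h.trans hf₂.symm) with ⟨_, h2⟩ | ⟨_, h2⟩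
        · exact hb2 (h2 ▸ hq₂L)
        · exact hb1 (h2 ▸ hp₂K)
      · exact Or.inr h


end Paper
end

section
/- Let S and T be dependent 3-cutsets of G with S ∩ T = ∅, let x ∈ S and y ∈ T, let C be the connected component of G − S containing y and D the connected component of G − T containing x, and suppose C ∩ D = ∅, T ∩ C = {y} and S ∩ D = {x} (i.e. {x, y} is a small part of the decomposition of G by {S, T}). Then x and y are adjacent, and each of S and T can be complemented by the edge xy: deleting the two vertices of S \ {x} together with the edge xy disconnects G, and deleting the two vertices of T \ {y} together with the edge xy disconnects G. -/
namespace Paper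

variable {V : Type*}

lemma walk_closed {W : Type*} {G' : SimpleGraph W} {P : W → Prop}
    (hP : ∀ a b, G'.Adj a b → P a → P b) :
    ∀ {a b : W}, G'.Walk a b → P a → P b := by
  intro a b w
  induction w with
  | nil => exact id
  | cons h _ ih => exact fun ha => ih (hP _ _ h ha)

lemma not_reachable_of_closed {W : Type*} {G' : SimpleGraph W} {P : W → Prop}
    (hP : ∀ a b, G'.Adj a b → P a → P b) {a b : W} (ha : P a) (hb : ¬ P b) :
    ¬ G'.Reachable a b := fun h => h.elim fun w => hb (walk_closed hP w ha)

lemma mem_compOutside_self {G : SimpleGraph V} {R : Set V} {u : V} (hu : u ∉ R) :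
    u ∈ compOutside G R u := ⟨hu, hu, SimpleGraph.Reachable.refl _⟩

lemma compOutside_not_mem {G : SimpleGraph V} {R : Set V} {u z : V}
    (hz : z ∈ compOutside G R u) : z ∉ R := hz.2.1

lemma mem_compOutside_of_adj {G : SimpleGraph V} {R : Set V} {u z w : V}
    (hz : z ∈ compOutside G R u) (hw : w ∉ R) (hadj : G.Adj z w) :
    w ∈ compOutside G R u := by
  obtain ⟨hu, hz', hr⟩ := hz
  refine ⟨hu, hw, hr.trans (SimpleGraph.Adj.reachable ?_)⟩
  simpa using hadj

lemma cut_helper (G : SimpleGraph V) (S C : Set V) (x y : V)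
    (hyS : y ∉ S) (hyC : y ∈ C) (hxC : x ∉ C)
    (hclosed : ∀ z w, z ∈ C → w ∉ S → G.Adj z w → w ∈ C)
    (hN : ∀ z, z ∈ C → G.Adj x z → z = y) :
    CutVE G (S \ {x}) {s(x, y)} := by
  intro hconn
  have hxmem : x ∈ ((S \ {x})ᶜ : Set V) := by simp
  have hymem : y ∈ ((S \ {x})ᶜ : Set V) := by simp [hyS]
  have hreach := hconn.preconnected ⟨y, hymem⟩ ⟨x, hxmem⟩
  refine not_reachable_of_closed (P := fun b : ((S \ {x})ᶜ : Set V) => (b : V) ∈ C) ?_ hyC hxC hreach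
  intro a b hab ha
  have hadj : (G.deleteEdges {s(x, y)}).Adj (a : V) (b : V) := hab
  rw [SimpleGraph.deleteEdges_adj] at hadj
  by_cases hbS : (b : V) ∈ S
  · have hbx : (b : V) = x := by
      have hb2 := b.2
      simp only [Set.mem_compl_iff, Set.mem_diff, Set.mem_singleton_iff, not_and, not_not] at hb2
      exact hb2 hbS
    have hxa : G.Adj x (a : V) := by have h2 := hadj.1.symm; rwa [hbx] at h2
    have hay : (a : V) = y := hN _ ha hxa
    exfalso
    apply hadj.2
    rw [hay, hbx]
    simp [Sym2.eq_swap]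
  · exact hclosed _ _ ha hbS hadj.1

/-- Corollary `ll31c2`: if `{x, y}` is a small part of the decomposition by the
dependent disjoint 3-cutsets `S` and `T`, then each of `S`, `T` can be
complemented by the edge `xy`. -/
theorem stmt_6 [Fintype V] (G : SimpleGraph V)
    (htri : IsTriconnected G) (hbig : 6 < Fintype.card V)
    (S T : Set V) (hS : IsThreeCutset G S) (hT : IsThreeCutset G T)
    (hdep : Dependent G S T) (hST : S ∩ T = ∅)
    (x y : V) (hx : x ∈ S) (hy : y ∈ T)
    (hCD : compOutside G S y ∩ compOutside G T x = ∅)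
    (hTC : T ∩ compOutside G S y = {y})
    (hSD : S ∩ compOutside G T x = {x}) :
    G.Adj x y ∧
      CutVE G (S \ {x}) {s(x, y)} ∧
      CutVE G (T \ {y}) {s(x, y)} := by
  classical
  set C := compOutside G S y with hCdef
  set D := compOutside G T x with hDdef
  have hxT : x ∉ T := fun h => by
    have : x ∈ S ∩ T := ⟨hx, h⟩
    rw [hST] at this; exact this
  have hyS : y ∉ S := fun h => by
    have : y ∈ S ∩ T := ⟨h, hy⟩
    rw [hST] at this; exact this
  have hyC : y ∈ C := mem_compOutside_self hyS
  have hxD : x ∈ D := mem_compOutside_self hxT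
  have hxC : x ∉ C := fun h => compOutside_not_mem h hx
  have hyD : y ∉ D := fun h => compOutside_not_mem h hy
  have hclosedC : ∀ z w, z ∈ C → w ∉ S → G.Adj z w → w ∈ C :=
    fun z w hz hw hadj => mem_compOutside_of_adj hz hw hadj
  have hclosedD : ∀ z w, z ∈ D → w ∉ T → G.Adj z w → w ∈ D :=
    fun z w hz hw hadj => mem_compOutside_of_adj hz hw hadj
  -- every neighbor of x in C is y
  have hNC : ∀ z, z ∈ C → G.Adj x z → z = y := by
    intro z hz hadj
    by_cases hzT : z ∈ T
    · have : z ∈ T ∩ C := ⟨hzT, hz⟩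
      rw [hTC] at this; exact this
    · exfalso
      have hzD : z ∈ D := mem_compOutside_of_adj hxD hzT hadj
      have : z ∈ C ∩ D := ⟨hz, hzD⟩
      rw [hCD] at this; exact this
  -- every neighbor of y in D is x
  have hND : ∀ z, z ∈ D → G.Adj y z → z = x := by
    intro z hz hadj
    by_cases hzS : z ∈ S
    · have : z ∈ S ∩ D := ⟨hzS, hz⟩
      rw [hSD] at this; exact this
    · exfalso
      have hzC : z ∈ C := mem_compOutside_of_adj hyC hzS hadj
      have : z ∈ C ∩ D := ⟨hzC, hz⟩
      rw [hCD] at this; exact this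
  -- x and y are adjacent
  have hadjxy : G.Adj x y := by
    by_contra hnadj
    have hcard : (S \ {x}).ncard ≤ 2 := by
      rw [Set.ncard_diff_singleton_of_mem hx, hS.1]
    have hconn := htri.2 (S \ {x}) hcard
    have hxmem : x ∈ ((S \ {x})ᶜ : Set V) := by simp
    have hymem : y ∈ ((S \ {x})ᶜ : Set V) := by simp [hyS]
    have hreach := hconn.preconnected ⟨y, hymem⟩ ⟨x, hxmem⟩
    refine not_reachable_of_closed (P := fun b : ((S \ {x})ᶜ : Set V) => (b : V) ∈ C) ?_ hyC hxC hreach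
    intro a b hab ha
    have hadj : G.Adj (a : V) (b : V) := hab
    by_cases hbS : (b : V) ∈ S
    · have hbx : (b : V) = x := by
        have hb2 := b.2
        simp only [Set.mem_compl_iff, Set.mem_diff, Set.mem_singleton_iff, not_and,
          not_not] at hb2
        exact hb2 hbS
      exfalso
      have hxa : G.Adj x (a : V) := by have h2 := hadj.symm; rwa [hbx] at h2
      have hay : (a : V) = y := hNC _ ha hxa
      rw [hay] at hxa
      exact hnadj hxa
    · exact hclosedC _ _ ha hbS hadj
  refine ⟨hadjxy, ?_, ?_⟩
  · exact cut_helper G S C x y hyS hyC hxC hclosedC hNC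
  · have := cut_helper G T D y x hxT hxD hyD hclosedD hND
    rwa [Sym2.eq_swap] at this


end Paper
end

section
/- Let e_1 and e_2 be two edges of G with no common endpoint, and let z_1 ≠ z_2 be vertices of G not incident to e_1 or e_2 such that M_1 = {e_1, e_2, z_1} and M_2 = {e_1, e_2, z_2} are both cuts in 𝔐_2(G). Then z_1 and z_2 are adjacent in G and {e_1, e_2, z_1z_2} ∈ 𝔐_3(G); that is, deleting the three edges e_1, e_2 and z_1z_2 from G yields a disconnected graph. -/
/-! Write `H = G - e₁ - e₂`, let `A₁` be the component of `z₂` in `H - z₁` and `A₂` the component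
of `z₁` in `H - z₂`. By triconnectivity each `eᵢ` joins `A₁` to another component of `H - z₁`
(otherwise `z₁` and one endpoint of the other edge would separate `G`), and likewise for `A₂`.
Separating sets `{p₁, p₂}` (the endpoints of `e₁, e₂` in `A₁`) and `{z₁, z₂}` then show that
`A₁` and `A₂` partition `V`. The only edges of `G` between `A₁` and `A₂` are `e₁`, `e₂` and `z₁z₂`,
so deleting them disconnects `G`; and `z₁z₂` must be an edge, as otherwise the endpoints of
`e₁, e₂` in `A₂` would separate `G`. -/

namespace Paper

variable {V : Type*}

lemma ncard_pair_le (a b : V) : ({a, b} : Set V).ncard ≤ 2 :=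
  (Set.ncard_insert_le a {b}).trans (by rw [Set.ncard_singleton])

lemma adj_deleteEdges_or_mem {G : SimpleGraph V} {E : Set (Sym2 V)} {u v : V} (h : G.Adj u v) :
    (G.deleteEdges E).Adj u v ∨ s(u, v) ∈ E := by
  by_cases hE : s(u, v) ∈ E
  · exact Or.inr hE
  · exact Or.inl (SimpleGraph.deleteEdges_adj.mpr ⟨h, hE⟩)

lemma notMem_of_mk_eq_mk {S : Set V} {p q p' q' : V} (h : s(p, q) = s(p', q'))
    (hp' : p' ∈ S) (hq' : q' ∉ S) (hq : q ∈ S) : p ∉ S := by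
  rcases Sym2.eq_iff.mp h with ⟨rfl, rfl⟩ | ⟨rfl, rfl⟩
  exacts [absurd hq hq', hq']

lemma notMem_of_mem_mk {X : Set V} {x u v : V} (hx : x ∈ s(u, v)) (hu : u ∉ X) (hv : v ∉ X) :
    x ∉ X := by
  rcases Sym2.mem_iff.mp hx with rfl | rfl
  exacts [hu, hv]

lemma subsingleton_setOf_mk_eq_of_mem_of_notMem (g : Sym2 V) (S : Set V) :
    {u | u ∈ S ∧ ∃ v ∉ S, g = s(u, v)}.Subsingleton := by
  rintro u₁ ⟨hu₁, v₁, hv₁, rfl⟩ u₂ ⟨-, v₂, hv₂, h⟩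
  rcases Sym2.eq_iff.mp h with ⟨h, -⟩ | ⟨h, -⟩
  exacts [h, absurd (h ▸ hu₁) hv₂]

lemma mem_of_induce_connected {K : SimpleGraph V} {s S : Set V} (hK : (K.induce s).Connected)
    (hS : ∀ u v, K.Adj u v → u ∈ s → v ∈ s → u ∈ S → v ∈ S) {a c : V}
    (ha : a ∈ s) (hc : c ∈ s) (haS : a ∈ S) : c ∈ S := by
  by_contra hcS
  obtain ⟨w⟩ := hK.preconnected ⟨a, ha⟩ ⟨c, hc⟩
  obtain ⟨d, -, hd, hd'⟩ := w.exists_boundary_dart {x | x.1 ∈ S} haS hcS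
  exact hd' (hS _ _ d.adj d.fst.2 d.snd.2 hd)

lemma IsTriconnected.mem_of_forall_adj [Fintype V] {G : SimpleGraph V} (htri : IsTriconnected G)
    {X S : Set V} (hX : X.ncard ≤ 2) (hS : ∀ u v, G.Adj u v → u ∉ X → v ∉ X → u ∈ S → v ∈ S)
    {a c : V} (ha : a ∉ X) (hc : c ∉ X) (haS : a ∈ S) : c ∈ S :=
  mem_of_induce_connected (htri.2 X hX) hS ha hc haS

lemma cutVE_empty_of_forall_adj {G : SimpleGraph V} {E : Set (Sym2 V)} {S : Set V}
    (hS : ∀ u v, G.Adj u v → u ∈ S → v ∉ S → s(u, v) ∈ E) {a c : V} (ha : a ∈ S) (hc : c ∉ S) :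
    CutVE G ∅ E := fun hconn =>
  hc <| mem_of_induce_connected hconn
    (fun u v huv _ _ hu => by_contra fun hv =>
      (SimpleGraph.deleteEdges_adj.mp huv).2 (hS u v huv.1 hu hv)) (s := ∅ᶜ)
    (Set.notMem_empty a) (Set.notMem_empty c) ha

section compOutside

variable {H : SimpleGraph V} {R : Set V} {b v w : V}

lemma mem_compOutside_self_s7 (hb : b ∉ R) : b ∈ compOutside H R b :=
  ⟨hb, hb, .rfl⟩

lemma notMem_of_mem_compOutside (hv : v ∈ compOutside H R b) : v ∉ R :=
  hv.2.1

lemma mem_compOutside_of_adj_s7 (hv : v ∈ compOutside H R b) (hvw : H.Adj v w) (hw : w ∉ R) :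
    w ∈ compOutside H R b :=
  let ⟨hb, _, hr⟩ := hv
  ⟨hb, hw, hr.trans (SimpleGraph.Adj.reachable (G := H.induce Rᶜ) hvw)⟩

lemma IsCutset.exists_notMem_compOutside (hcut : IsCutset H R) (hb : b ∉ R) :
    ∃ w ∉ R, w ∉ compOutside H R b := by
  by_contra! hall
  refine hcut ((SimpleGraph.connected_iff _).mpr ⟨fun x y => ?_, ⟨⟨b, hb⟩⟩⟩)
  obtain ⟨_, _, hx⟩ := hall x x.2
  obtain ⟨_, _, hy⟩ := hall y y.2
  exact hx.symm.trans hy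

end compOutside

lemma IsTriconnected.exists_crossing_of_isCutset [Fintype V] {G : SimpleGraph V}
    (htri : IsTriconnected G) {E : Set (Sym2 V)} {f g : Sym2 V} (hE : E ⊆ {f, g}) {z b : V}
    (hcut : IsCutset (G.deleteEdges E) {z}) (hbz : b ≠ z) (hbg : b ∉ g) :
    ∃ p q, f = s(p, q) ∧ p ∈ compOutside (G.deleteEdges E) {z} b ∧
      q ∉ compOutside (G.deleteEdges E) {z} b ∧ q ≠ z := by
  set A := compOutside (G.deleteEdges E) {z} b
  by_contra! hf
  obtain ⟨w, hwz, hwA⟩ := hcut.exists_notMem_compOutside hbz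
  set P := {u | u ∈ A ∧ ∃ v ∉ A, g = s(u, v)}
  have hP : P.ncard ≤ 1 :=
    Set.ncard_le_one_iff_subsingleton.mpr (subsingleton_setOf_mk_eq_of_mem_of_notMem g A)
  -- Deleting `z` and the endpoint in `A` of `g` (if `g` leaves `A`) isolates `A` in `G`.
  have hA : ∀ u v, G.Adj u v → u ∉ insert z P → v ∉ insert z P → u ∈ A → v ∈ A := by
    intro u v huv hu hv huA
    have hvz : v ∉ ({z} : Set V) := fun h => hv (Or.inl h)
    by_contra hvA
    rcases adj_deleteEdges_or_mem (E := E) huv with hH | huvE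
    · exact hvA (mem_compOutside_of_adj_s7 huA hH hvz)
    · rcases hE huvE with hfuv | hguv
      · exact hvz (hf u v hfuv.symm huA hvA)
      · exact hu (Or.inr ⟨huA, v, hvA, hguv.symm⟩)
  refine hwA (htri.mem_of_forall_adj ((Set.ncard_insert_le z P).trans (by omega)) hA ?_ ?_
    (mem_compOutside_self_s7 (by simpa using hbz)))
  · rintro (rfl | ⟨-, v, -, rfl⟩)
    exacts [hbz rfl, hbg (Sym2.mem_mk_left _ _)]
  · rintro (rfl | ⟨hwA', -⟩)
    exacts [hwz rfl, hwA hwA']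

section SharedEdges

variable {G : SimpleGraph V} {z₁ z₂ p₁ q₁ p₂ q₂ : V}

local notation "A₁" => compOutside (G.deleteEdges {s(p₁, q₁), s(p₂, q₂)}) (singleton z₁) z₂
local notation "A₂" => compOutside (G.deleteEdges {s(p₁, q₁), s(p₂, q₂)}) (singleton z₂) z₁

lemma compl_compOutside_subset [Fintype V] (htri : IsTriconnected G) (hz : z₁ ≠ z₂)
    (hp₁ : p₁ ∈ A₁) (hp₂ : p₂ ∈ A₁) : A₁ᶜ ⊆ A₂ := by
  have hz₂ : z₂ ∈ A₁ := mem_compOutside_self_s7 hz.symm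
  have hz₁ : z₁ ∈ A₂ := mem_compOutside_self_s7 hz
  intro w hw
  by_contra hw'
  have hS : ∀ u v, G.Adj u v → u ∉ ({p₁, p₂} : Set V) → v ∉ ({p₁, p₂} : Set V) →
      u ∈ A₁ᶜ ∩ A₂ᶜ → v ∈ A₁ᶜ ∩ A₂ᶜ := by
    rintro u v huv hu hv ⟨hu₁, hu₂⟩
    rcases adj_deleteEdges_or_mem huv with hH | hE
    · have huz₁ : u ∉ ({z₁} : Set V) := fun h => hu₂ (h ▸ hz₁)
      have huz₂ : u ∉ ({z₂} : Set V) := fun h => hu₁ (h ▸ hz₂)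
      exact ⟨fun hv₁ => hu₁ (mem_compOutside_of_adj_s7 hv₁ hH.symm huz₁),
        fun hv₂ => hu₂ (mem_compOutside_of_adj_s7 hv₂ hH.symm huz₂)⟩
    · rcases hE with hE | hE
      exacts [(notMem_of_mem_mk (hE ▸ Sym2.mem_mk_left p₁ q₁) hu hv (Or.inl rfl)).elim,
        (notMem_of_mem_mk (hE ▸ Sym2.mem_mk_left p₂ q₂) hu hv (Or.inr rfl)).elim]
  refine (htri.mem_of_forall_adj (ncard_pair_le p₁ p₂) hS ?_ ?_ ⟨hw, hw'⟩).2 hz₁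
  · rintro (rfl | rfl)
    exacts [hw hp₁, hw hp₂]
  · rintro (rfl | rfl)
    exacts [notMem_of_mem_compOutside hp₁ rfl, notMem_of_mem_compOutside hp₂ rfl]

lemma disjoint_compOutside [Fintype V] (htri : IsTriconnected G) (hz : z₁ ≠ z₂)
    (hp₁ : p₁ ∉ A₂) (hp₂ : p₂ ∉ A₂) (hq₁ : q₁ ∉ A₁) (hq₂ : q₂ ∉ A₁) (hq₁z₁ : q₁ ≠ z₁) :
    Disjoint A₁ A₂ := by
  rw [Set.disjoint_iff]
  intro w hw
  have hS : ∀ u v, G.Adj u v → u ∉ ({z₁, z₂} : Set V) → v ∉ ({z₁, z₂} : Set V) →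
      u ∈ A₁ ∩ A₂ → v ∈ A₁ ∩ A₂ := by
    rintro u v huv - hv ⟨hu₁, hu₂⟩
    rcases adj_deleteEdges_or_mem huv with hH | hE
    · exact ⟨mem_compOutside_of_adj_s7 hu₁ hH fun h => hv (Or.inl h),
        mem_compOutside_of_adj_s7 hu₂ hH fun h => hv (Or.inr h)⟩
    · -- no endpoint of a deleted edge lies in both sides
      rcases hE with hE | hE <;> rcases Sym2.eq_iff.mp hE with ⟨rfl, -⟩ | ⟨rfl, -⟩
      exacts [absurd hu₂ hp₁, absurd hu₁ hq₁, absurd hu₂ hp₂, absurd hu₁ hq₂]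
  have hz₂ : z₂ ∈ A₁ := mem_compOutside_self_s7 hz.symm
  have hq₁z₂ : q₁ ≠ z₂ := fun h => hq₁ (h ▸ hz₂)
  refine hq₁ (htri.mem_of_forall_adj (ncard_pair_le z₁ z₂) hS ?_ ?_ hw).1
  · rintro (rfl | rfl)
    exacts [notMem_of_mem_compOutside hw.1 rfl, notMem_of_mem_compOutside hw.2 rfl]
  · rintro (rfl | rfl)
    exacts [hq₁z₁ rfl, hq₁z₂ rfl]

lemma mk_mem_of_adj_of_mem_of_notMem (hz : z₁ ≠ z₂) (hdisj : Disjoint A₁ A₂) {u v : V}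
    (huv : G.Adj u v) (hu : u ∈ A₁) (hv : v ∉ A₁) :
    s(u, v) ∈ ({s(p₁, q₁), s(p₂, q₂), s(z₁, z₂)} : Set (Sym2 V)) := by
  rcases adj_deleteEdges_or_mem huv with hH | hE
  · obtain rfl : v = z₁ := by
      by_contra hvz
      exact hv (mem_compOutside_of_adj_s7 hu hH hvz)
    obtain rfl : u = z₂ := by
      by_contra huz
      exact hdisj.notMem_of_mem_left hu
        (mem_compOutside_of_adj_s7 (mem_compOutside_self_s7 hz) hH.symm huz)
    exact Or.inr (Or.inr Sym2.eq_swap)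
  · rcases hE with hE | hE
    exacts [Or.inl hE, Or.inr (Or.inl hE)]

lemma adj_of_disjoint_compOutside [Fintype V] (htri : IsTriconnected G) (hz : z₁ ≠ z₂)
    (hdisj : Disjoint A₁ A₂) (hq₁ : q₁ ∉ A₁) (hq₂ : q₂ ∉ A₁) (hq₁z₁ : q₁ ≠ z₁)
    (hq₂z₁ : q₂ ≠ z₁) : G.Adj z₁ z₂ := by
  by_contra hadj
  have hS : ∀ u v, G.Adj u v → u ∉ ({q₁, q₂} : Set V) → v ∉ ({q₁, q₂} : Set V) →
      u ∈ A₁ → v ∈ A₁ := by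
    intro u v huv hu hv hu₁
    by_contra hv₁
    rcases mk_mem_of_adj_of_mem_of_notMem hz hdisj huv hu₁ hv₁ with hE | hE | hE
    · exact notMem_of_mem_mk (hE ▸ Sym2.mem_mk_right p₁ q₁) hu hv (Or.inl rfl)
    · exact notMem_of_mem_mk (hE ▸ Sym2.mem_mk_right p₂ q₂) hu hv (Or.inr rfl)
    · exact hadj (G.mem_edgeSet.mp (hE ▸ G.mem_edgeSet.mpr huv))
  have hz₂ : z₂ ∈ A₁ := mem_compOutside_self_s7 hz.symm
  refine notMem_of_mem_compOutside (htri.mem_of_forall_adj (ncard_pair_le q₁ q₂) hS ?_ ?_ hz₂) rfl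
  · rintro (rfl | rfl)
    exacts [hq₁ hz₂, hq₂ hz₂]
  · rintro (h | h)
    exacts [hq₁z₁ h.symm, hq₂z₁ h.symm]

end SharedEdges

theorem stmt_7_general [Fintype V] (G : SimpleGraph V)
    (htri : IsTriconnected G)
    (e₁ e₂ : Sym2 V)
    (z₁ z₂ : V) (hz : z₁ ≠ z₂)
    (hz₁e₁ : z₁ ∉ e₁) (hz₁e₂ : z₁ ∉ e₂) (hz₂e₁ : z₂ ∉ e₁) (hz₂e₂ : z₂ ∉ e₂)
    (hM₁ : CutVE G {z₁} {e₁, e₂}) (hM₂ : CutVE G {z₂} {e₁, e₂}) :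
    G.Adj z₁ z₂ ∧ CutVE G (∅ : Set V) {e₁, e₂, s(z₁, z₂)} := by
  have hswap : ({e₁, e₂} : Set (Sym2 V)) ⊆ {e₂, e₁} := (Set.pair_comm e₁ e₂).le
  obtain ⟨p₁', q₁', he₁', hp₁', hq₁', -⟩ :=
    htri.exists_crossing_of_isCutset subset_rfl hM₂ hz hz₁e₂
  obtain ⟨p₂', q₂', he₂', hp₂', hq₂', -⟩ := htri.exists_crossing_of_isCutset hswap hM₂ hz hz₁e₁
  obtain ⟨p₁, q₁, rfl, hp₁, hq₁, hq₁z₁⟩ :=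
    htri.exists_crossing_of_isCutset subset_rfl hM₁ hz.symm hz₂e₂
  obtain ⟨p₂, q₂, rfl, hp₂, hq₂, hq₂z₁⟩ :=
    htri.exists_crossing_of_isCutset hswap hM₁ hz.symm hz₂e₁
  have hcover := compl_compOutside_subset htri hz hp₁ hp₂
  have hdisj := disjoint_compOutside htri hz (notMem_of_mk_eq_mk he₁' hp₁' hq₁' (hcover hq₁))
    (notMem_of_mk_eq_mk he₂' hp₂' hq₂' (hcover hq₂)) hq₁ hq₂ hq₁z₁
  exact ⟨adj_of_disjoint_compOutside htri hz hdisj hq₁ hq₂ hq₁z₁ hq₂z₁,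
    cutVE_empty_of_forall_adj (fun _ _ => mk_mem_of_adj_of_mem_of_notMem hz hdisj)
      (mem_compOutside_self_s7 hz.symm) fun h => notMem_of_mem_compOutside h rfl⟩

/-- Lemma `ll32`: two cuts of `𝔐₂(G)` with the same two edges and distinct
vertices `z₁ ≠ z₂` yield an all-edge cut `{e₁, e₂, z₁z₂} ∈ 𝔐₃(G)`. -/
theorem stmt_7 [Fintype V] (G : SimpleGraph V)
    (htri : IsTriconnected G) (hbig : 6 < Fintype.card V)
    (e₁ e₂ : Sym2 V) (he₁ : e₁ ∈ G.edgeSet) (he₂ : e₂ ∈ G.edgeSet)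
    (hdisj : ∀ v : V, ¬ (v ∈ e₁ ∧ v ∈ e₂))
    (z₁ z₂ : V) (hz : z₁ ≠ z₂)
    (hz₁e₁ : z₁ ∉ e₁) (hz₁e₂ : z₁ ∉ e₂) (hz₂e₁ : z₂ ∉ e₁) (hz₂e₂ : z₂ ∉ e₂)
    (hM₁ : CutVE G {z₁} {e₁, e₂}) (hM₂ : CutVE G {z₂} {e₁, e₂}) :
    G.Adj z₁ z₂ ∧ CutVE G (∅ : Set V) {e₁, e₂, s(z₁, z₂)} :=
  stmt_7_general G htri e₁ e₂ z₁ z₂ hz hz₁e₁ hz₁e₂ hz₂e₁ hz₂e₂ hM₁ hM₂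

end Paper
end

section
/- Let M_1 and M_2 be distinct cuts of G having at least two common edges. Then at least one of M_1 and M_2 is not a maximal cut, i.e. it can be complemented by some edge of G. -/
/-!
A cutting set `(A, F)` is handled through a side `X`: a union of some, but not all, components of
`G − A − F`. Triconnectivity says that no cutting set has fewer than three elements, so for a
cutting set of size three every edge of `F` leaves every side, avoiding `A`, and every vertex of `A`
has a neighbour in every side.

For two such cutting sets sharing two edges, the symmetric difference of their sides, taken outside
`A₁ ∪ A₂`, is cut off by `A₁ ∪ A₂` together with `F₁ ∆ F₂`, at most two elements; hence the sides
agree off `A₁ ∪ A₂` up to complementation. If `A₁ = A₂`, the sides determine the edges and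
`F₁ = F₂`. Otherwise some `a ∈ A₁ \ A₂` has a neighbour in a side of `(A₁, F₁)`, and each such
neighbour lies in `A₂` or is joined to `a` by an edge of `F₂ \ F₁`. So there is exactly one, `b`, and
replacing `a` by the edge `ab` leaves a cutting set.
-/

namespace Paper

variable {V : Type*}

/-- The cut `(A, E)` can be complemented by some edge of `G`. -/
def CanComplement (G : SimpleGraph V) (A : Set V) (E : Set (Sym2 V)) : Prop :=
  ∃ x ∈ A, ∃ y : V, G.Adj x y ∧ CutVE G (A \ {x}) (insert s(x, y) E)

open SimpleGraph

section Shores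

variable {G : SimpleGraph V} {A B X Y : Set V} {F F₁ F₂ : Set (Sym2 V)}

def boundary (G : SimpleGraph V) (A X : Set V) : Set (Sym2 V) :=
  {ε | ∃ u v, u ∈ X ∧ v ∉ X ∧ u ∉ A ∧ v ∉ A ∧ G.Adj u v ∧ s(u, v) = ε}

/-- `X` is a union of connected components of `G − A − F`. -/
def IsShore (G : SimpleGraph V) (A : Set V) (F : Set (Sym2 V)) (X : Set V) : Prop :=
  Disjoint X A ∧ boundary G A X ⊆ F

/-- A side `H_i` of the cutting set `(A, F)`: some, but not all, components of `G − A − F`. -/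
def IsSide (G : SimpleGraph V) (A : Set V) (F : Set (Sym2 V)) (X : Set V) : Prop :=
  IsShore G A F X ∧ X.Nonempty ∧ (X ∪ A)ᶜ.Nonempty

theorem mk_mem_boundary {u v : V} :
    s(u, v) ∈ boundary G A X ↔ G.Adj u v ∧ u ∉ A ∧ v ∉ A ∧ (u ∈ X ↔ v ∉ X) := by
  constructor
  · rintro ⟨p, q, hp, hq, hpA, hqA, hpq, he⟩
    rcases Sym2.eq_iff.1 he with ⟨rfl, rfl⟩ | ⟨rfl, rfl⟩
    · exact ⟨hpq, hpA, hqA, by tauto⟩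
    · exact ⟨hpq.symm, hqA, hpA, by tauto⟩
  · rintro ⟨huv, huA, hvA, hX⟩
    by_cases hu : u ∈ X
    · exact ⟨u, v, hu, hX.1 hu, huA, hvA, huv, rfl⟩
    · exact ⟨v, u, by tauto, hu, hvA, huA, huv.symm, Sym2.eq_swap⟩

theorem boundary_compl : boundary G A (X ∪ A)ᶜ = boundary G A X := by
  ext ε
  induction ε using Sym2.ind
  simp only [mk_mem_boundary, Set.mem_compl_iff, Set.mem_union]
  tauto

theorem boundary_symmDiff_subset :
    boundary G A (symmDiff X Y) ⊆ symmDiff (boundary G A X) (boundary G A Y) := by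
  intro ε
  induction ε using Sym2.ind
  simp only [mk_mem_boundary, Set.mem_symmDiff]
  tauto

theorem boundary_diff_subset : boundary G (A ∪ B) (X \ B) ⊆ boundary G A X := by
  intro ε
  induction ε using Sym2.ind
  simp only [mk_mem_boundary, Set.mem_union, Set.mem_sdiff]
  tauto

theorem boundary_inter_boundary_subset :
    boundary G A X ∩ boundary G B Y ⊆ boundary G (A ∪ B) (X \ B) := by
  intro ε
  induction ε using Sym2.ind
  simp only [Set.mem_inter_iff, mk_mem_boundary, Set.mem_union, Set.mem_sdiff]
  tauto

theorem boundary_insert_diff_subset {w : V} :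
    boundary G (insert w A) (X \ {w}) ⊆ {ε ∈ boundary G A X | w ∉ ε} := by
  intro ε
  induction ε using Sym2.ind
  simp only [Set.mem_ofPred_eq, mk_mem_boundary, Set.mem_insert_iff, Set.mem_sdiff,
    Set.mem_singleton_iff, Sym2.mem_iff]
  grind

theorem IsShore.compl (h : IsShore G A F X) : IsShore G A F (X ∪ A)ᶜ :=
  ⟨disjoint_compl_left.mono_right Set.subset_union_right, boundary_compl.symm ▸ h.2⟩

theorem IsShore.diff (h : IsShore G A F X) : IsShore G (A ∪ B) F (X \ B) :=
  ⟨Set.disjoint_union_right.2 ⟨h.1.mono_left Set.sdiff_subset, Set.disjoint_sdiff_left⟩,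
    boundary_diff_subset.trans h.2⟩

theorem IsShore.symmDiff (h₁ : IsShore G A F₁ X) (h₂ : IsShore G A F₂ Y)
    (h : F₁ ∩ F₂ ⊆ boundary G A X ∩ boundary G A Y) :
    IsShore G A (symmDiff F₁ F₂) (symmDiff X Y) := by
  refine ⟨?_, fun ε hε => ?_⟩
  · exact (h₁.1.sup_left h₂.1).mono_left symmDiff_le_sup
  have := boundary_symmDiff_subset hε
  have := @h₁.2 ε
  have := @h₂.2 ε
  have := @h ε
  simp only [Set.mem_symmDiff, Set.mem_inter_iff] at *
  tauto

theorem IsShore.insert_vertex {ε : Sym2 V} {w : V} (h : IsShore G A (insert ε F) X)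
    (hw : w ∈ ε) : IsShore G (insert w A) F (X \ {w}) := by
  refine ⟨Set.disjoint_insert_right.2 ⟨fun h => h.2 rfl, h.1.mono_left Set.sdiff_subset⟩,
    fun ε' hε' => ?_⟩
  obtain ⟨hε'X, hwε'⟩ := boundary_insert_diff_subset hε'
  rcases h.2 hε'X with rfl | hε'F
  · exact absurd hw hwε'
  · exact hε'F

theorem IsSide.compl (h : IsSide G A F X) : IsSide G A F (X ∪ A)ᶜ := by
  obtain ⟨hX, ⟨x, hx⟩, hY⟩ := h
  refine ⟨hX.compl, hY, x, ?_⟩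
  have := Set.disjoint_left.1 hX.1 hx
  simp_all

theorem IsShore.mem_of_reachable (h : IsShore G A F X) {p q : (Aᶜ : Set V)}
    (hpq : (DelVE G A F).Reachable p q) (hp : p.1 ∈ X) : q.1 ∈ X := by
  obtain ⟨w⟩ := hpq
  induction w with
  | nil => exact hp
  | @cons p r q hpr _ ih =>
    refine ih (by_contra fun hr => ?_)
    have hadj : G.Adj p r ∧ s(p.1, r.1) ∉ F := by simpa [DelVE] using hpr
    exact hadj.2 (h.2 ⟨p, r, hp, hr, p.2, r.2, hadj.1, rfl⟩)

theorem IsSide.cutVE (h : IsSide G A F X) : CutVE G A F := by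
  obtain ⟨hX, ⟨x, hx⟩, ⟨y, hy⟩⟩ := h
  rw [Set.mem_compl_iff, Set.mem_union, not_or] at hy
  intro hconn
  exact hy.1 (hX.mem_of_reachable
    (hconn.preconnected ⟨x, Set.disjoint_left.1 hX.1 hx⟩ ⟨y, hy.2⟩) hx)

theorem exists_isSide_of_cutVE (hA : Aᶜ.Nonempty) (h : CutVE G A F) : ∃ X, IsSide G A F X := by
  have := hA.to_subtype
  obtain ⟨u, w, huw⟩ : ∃ u w, ¬ (DelVE G A F).Reachable u w := by
    by_contra! hr
    exact h ⟨hr⟩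
  refine ⟨compVE G A F u, ⟨⟨?_, ?_⟩, ⟨u, u.2, u.2, .rfl⟩, ⟨w, ?_⟩⟩⟩
  · exact Set.disjoint_left.2 fun y ⟨_, hy, _⟩ => hy
  · rintro _ ⟨p, q, ⟨_, hp, hup⟩, hq, -, hqA, hpq, rfl⟩
    by_contra hF
    refine hq ⟨u.2, hqA, hup.trans (Adj.reachable ?_)⟩
    simpa [DelVE] using ⟨hpq, hF⟩
  · simp only [Set.mem_compl_iff, Set.mem_union, not_or]
    exact ⟨fun ⟨_, _, hr⟩ => huw hr, w.2⟩

end Shores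

section Triconnected

variable [Fintype V] {G : SimpleGraph V} {A X : Set V} {F : Set (Sym2 V)}

theorem IsTriconnected.compl_nonempty (htri : IsTriconnected G) {S : Set V} (hS : S.ncard ≤ 3) :
    Sᶜ.Nonempty := by
  rw [Set.nonempty_iff_ne_empty, Ne, Set.compl_empty_iff]
  rintro rfl
  rw [Set.ncard_univ, Nat.card_eq_fintype_card] at hS
  have := htri.1
  omega

/- Induction on `F`: an edge `uv` of `F` from `u ∈ X` to `v` is traded for the vertex `u` (removed
from `X`) or `v`. One of the two trades leaves a side unless `V = A ∪ {u, v}`, at most three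
vertices. -/
theorem IsSide.three_le_ncard_add_ncard (htri : IsTriconnected G) (h : IsSide G A F X) :
    3 ≤ A.ncard + F.ncard := by
  by_contra! hc
  induction F, F.toFinite using Set.Finite.induction_on generalizing A X with
  | empty =>
    refine h.cutVE ?_
    simpa [DelVE] using htri.2 A (by simp at hc; omega)
  | @insert ε F hεF _ ih =>
    rw [Set.ncard_insert_of_notMem hεF] at hc
    obtain ⟨hX, ⟨x, hx⟩, ⟨y, hy⟩⟩ := h
    by_cases hε : ε ∈ boundary G A X
    · obtain ⟨u, v, hu, hv, -, hvA, -, rfl⟩ := hε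
      by_cases hXu : (X \ {u}).Nonempty
      · refine ih ⟨hX.insert_vertex (Sym2.mem_mk_left u v), hXu, y, ?_⟩ ?_
        · have : y ≠ u := by rintro rfl; exact hy (Or.inl hu)
          simp_all
        · have := Set.ncard_insert_le u A
          omega
      by_cases hXv : (X ∪ insert v A)ᶜ.Nonempty
      · refine ih ⟨?_, ⟨x, hx⟩, hXv⟩ ?_
        · simpa [Set.sdiff_singleton_eq_self hv] using hX.insert_vertex (Sym2.mem_mk_right u v)
        · have := Set.ncard_insert_le v A
          omega
      obtain ⟨w, hw⟩ := htri.compl_nonempty (S := insert u (insert v A)) (by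
        have := Set.ncard_insert_le u (insert v A)
        have := Set.ncard_insert_le v A
        omega)
      refine hXv ⟨w, ?_⟩
      rw [Set.not_nonempty_iff_eq_empty, Set.sdiff_eq_empty] at hXu
      simp only [Set.mem_compl_iff, Set.mem_insert_iff, Set.mem_union, not_or] at hw ⊢
      exact ⟨fun hwX => hw.1 (hXu hwX), hw.2⟩
    · refine ih ⟨⟨hX.1, fun ε' hε' => ?_⟩, ⟨x, hx⟩, ⟨y, hy⟩⟩ (by omega)
      rcases hX.2 hε' with rfl | hε'F
      · exact absurd hε' hε
      · exact hε'F

theorem IsSide.subset_boundary (htri : IsTriconnected G) (h : IsSide G A F X)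
    (hc : A.ncard + F.ncard ≤ 3) : F ⊆ boundary G A X := by
  intro ε hεF
  by_contra hε
  have h3 := IsSide.three_le_ncard_add_ncard htri (F := F \ {ε})
    ⟨⟨h.1.1, fun ε' hε' => ⟨h.1.2 hε', fun hε'ε => hε (hε'ε ▸ hε')⟩⟩, h.2⟩
  have := (Set.ncard_pos (Set.toFinite _)).2 ⟨ε, hεF⟩
  rw [Set.ncard_sdiff_singleton_of_mem hεF] at h3
  omega

theorem IsSide.boundary_eq (htri : IsTriconnected G) (h : IsSide G A F X)
    (hc : A.ncard + F.ncard ≤ 3) : boundary G A X = F :=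
  h.1.2.antisymm (h.subset_boundary htri hc)

theorem IsSide.exists_adj (htri : IsTriconnected G) (h : IsSide G A F X)
    (hc : A.ncard + F.ncard ≤ 3) {a : V} (ha : a ∈ A) : ∃ v ∈ X, G.Adj a v := by
  by_contra! hna
  have hshore : IsShore G (A \ {a}) F X := by
    refine ⟨h.1.1.mono_right Set.sdiff_subset, ?_⟩
    rintro _ ⟨p, q, hp, hq, -, hqA, hpq, rfl⟩
    have hqa : q ≠ a := by rintro rfl; exact hna p hp hpq.symm
    exact h.1.2 ⟨p, q, hp, hq, Set.disjoint_left.1 h.1.1 hp, by simp_all, hpq, rfl⟩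
  have h3 := IsSide.three_le_ncard_add_ncard htri ⟨hshore, h.2.1,
    h.2.2.mono (Set.compl_subset_compl.2 (Set.union_subset_union_right _ Set.sdiff_subset))⟩
  have := (Set.ncard_pos (Set.toFinite _)).2 ⟨a, ha⟩
  rw [Set.ncard_sdiff_singleton_of_mem ha] at h3
  omega

theorem IsSide.canComplement (htri : IsTriconnected G) (h : IsSide G A F X)
    (hc : A.ncard + F.ncard ≤ 3) {a : V} (ha : a ∈ A) (hN : {v ∈ X | G.Adj a v}.ncard ≤ 1) :
    CanComplement G A F := by
  obtain ⟨b, hb, hab⟩ := h.exists_adj htri hc ha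
  have huniq : ∀ v ∈ X, G.Adj a v → v = b := fun v hv hav =>
    (Set.ncard_le_one (Set.toFinite _)).1 hN v ⟨hv, hav⟩ b ⟨hb, hab⟩
  refine ⟨a, ha, b, hab, IsSide.cutVE ⟨⟨h.1.1.mono_right Set.sdiff_subset, ?_⟩, h.2.1, ?_⟩⟩
  · rintro _ ⟨p, q, hp, hq, -, hqA, hpq, rfl⟩
    by_cases hqa : q = a
    · subst hqa
      rw [huniq p hp hpq.symm]
      exact Or.inl Sym2.eq_swap
    · exact Or.inr (h.1.2 ⟨p, q, hp, hq, Set.disjoint_left.1 h.1.1 hp, by simp_all, hpq, rfl⟩)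
  · exact h.2.2.mono (Set.compl_subset_compl.2 (Set.union_subset_union_right _ Set.sdiff_subset))

end Triconnected

section Counting

variable {α β : Type*} [Finite β] {A₁ A₂ : Set α} {F₁ F₂ : Set β}

theorem ncard_add_ncard_sdiff_le_one (hc : A₂.ncard + F₂.ncard = 3)
    (hF : 2 ≤ (F₁ ∩ F₂).ncard) : A₂.ncard + (F₂ \ F₁).ncard ≤ 1 := by
  have := Set.ncard_inter_add_ncard_sdiff_eq_ncard F₂ F₁
  rw [Set.inter_comm] at hF
  omega

theorem ncard_union_add_ncard_symmDiff_le_two (hc₁ : A₁.ncard + F₁.ncard = 3)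
    (hc₂ : A₂.ncard + F₂.ncard = 3) (hF : 2 ≤ (F₁ ∩ F₂).ncard) :
    (A₁ ∪ A₂).ncard + (symmDiff F₁ F₂).ncard ≤ 2 := by
  have := ncard_add_ncard_sdiff_le_one hc₁ (Set.inter_comm F₁ F₂ ▸ hF)
  have := ncard_add_ncard_sdiff_le_one hc₂ hF
  have := Set.ncard_union_le A₁ A₂
  have := Set.ncard_union_le (F₁ \ F₂) (F₂ \ F₁)
  rw [Set.symmDiff_def]
  omega

end Counting

section Uncrossing

variable [Fintype V] {G : SimpleGraph V} {A A₁ A₂ X₁ X₂ : Set V} {F₁ F₂ : Set (Sym2 V)}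

theorem IsSide.sdiff_eq_or (htri : IsTriconnected G) (h₁ : IsSide G A₁ F₁ X₁)
    (h₂ : IsSide G A₂ F₂ X₂) (hc₁ : A₁.ncard + F₁.ncard = 3) (hc₂ : A₂.ncard + F₂.ncard = 3)
    (hF : 2 ≤ (F₁ ∩ F₂).ncard) :
    X₂ \ A₁ = X₁ \ A₂ ∨ X₂ \ A₁ = (X₁ ∪ A₁)ᶜ \ A₂ := by
  have hcross : F₁ ∩ F₂ ⊆
      boundary G (A₁ ∪ A₂) (X₁ \ A₂) ∩ boundary G (A₁ ∪ A₂) (X₂ \ A₁) := by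
    rintro ε ⟨hε₁, hε₂⟩
    have hb₁ := h₁.subset_boundary htri hc₁.le hε₁
    have hb₂ := h₂.subset_boundary htri hc₂.le hε₂
    exact ⟨boundary_inter_boundary_subset ⟨hb₁, hb₂⟩,
      Set.union_comm A₂ A₁ ▸ boundary_inter_boundary_subset ⟨hb₂, hb₁⟩⟩
  have hshore := h₁.1.diff.symmDiff (Set.union_comm A₂ A₁ ▸ h₂.1.diff) hcross
  have hc := ncard_union_add_ncard_symmDiff_le_two hc₁ hc₂ hF
  by_contra! hne
  refine absurd (IsSide.three_le_ncard_add_ncard htri ⟨hshore, ?_, ?_⟩) (by omega)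
  · rw [Set.nonempty_iff_ne_empty, Ne, Set.symmDiff_eq_empty]
    exact hne.1.symm
  · by_contra hfull
    rw [Set.not_nonempty_iff_eq_empty, Set.compl_empty_iff] at hfull
    refine hne.2 (Set.ext fun w => ?_)
    have hw := hfull ▸ Set.mem_univ w
    have : w ∈ X₁ → w ∉ A₁ := fun h => Set.disjoint_left.1 h₁.1.1 h
    have : w ∈ X₂ → w ∉ A₂ := fun h => Set.disjoint_left.1 h₂.1.1 h
    simp only [Set.mem_union, Set.mem_symmDiff, Set.mem_sdiff, Set.mem_compl_iff] at hw ⊢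
    tauto

theorem IsSide.edges_eq_of_two_le_ncard_inter (htri : IsTriconnected G) (h₁ : IsSide G A F₁ X₁)
    (h₂ : IsSide G A F₂ X₂) (hc₁ : A.ncard + F₁.ncard = 3) (hc₂ : A.ncard + F₂.ncard = 3)
    (hF : 2 ≤ (F₁ ∩ F₂).ncard) : F₁ = F₂ := by
  rw [← h₁.boundary_eq htri hc₁.le, ← h₂.boundary_eq htri hc₂.le]
  rcases h₁.sdiff_eq_or htri h₂ hc₁ hc₂ hF with h | h
  · rw [h₂.1.1.sdiff_eq_left, h₁.1.1.sdiff_eq_left] at h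
    rw [h]
  · rw [h₂.1.1.sdiff_eq_left, h₁.compl.1.1.sdiff_eq_left] at h
    rw [h, boundary_compl]

theorem canComplement_of_mem_sdiff (htri : IsTriconnected G) (h₁ : IsSide G A₁ F₁ X₁)
    (h₂ : IsSide G A₂ F₂ X₂) (hc₁ : A₁.ncard + F₁.ncard = 3) (hc₂ : A₂.ncard + F₂.ncard = 3)
    (hF : 2 ≤ (F₁ ∩ F₂).ncard) {a : V} (ha : a ∈ A₁ \ A₂) :
    CanComplement G A₁ F₁ := by
  obtain ⟨ha₁, ha₂⟩ := ha
  obtain ⟨Y₂, hY₂, haY₂⟩ : ∃ Y₂, IsSide G A₂ F₂ Y₂ ∧ a ∉ Y₂ := by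
    by_cases ha : a ∈ X₂
    · exact ⟨_, h₂.compl, fun h => h (Or.inl ha)⟩
    · exact ⟨X₂, h₂, ha⟩
  obtain ⟨S₁, hS₁, hS⟩ : ∃ S₁, IsSide G A₁ F₁ S₁ ∧ Y₂ \ A₁ = S₁ \ A₂ := by
    rcases h₁.sdiff_eq_or htri hY₂ hc₁ hc₂ hF with h | h
    · exact ⟨X₁, h₁, h⟩
    · exact ⟨_, h₁.compl, h⟩
  have hN : {v ∈ S₁ | G.Adj a v} ⊆ A₂ ∪ (fun v => s(a, v)) ⁻¹' (F₂ \ F₁) := by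
    rintro v ⟨hv, hav⟩
    by_cases hvA₂ : v ∈ A₂
    · exact Or.inl hvA₂
    have hvY₂ : v ∈ Y₂ := (show v ∈ Y₂ \ A₁ by rw [hS]; exact ⟨hv, hvA₂⟩).1
    refine Or.inr ⟨hY₂.1.2 (mk_mem_boundary.2 ⟨hav, ha₂, hvA₂, by tauto⟩), fun hF₁ => ?_⟩
    exact (mk_mem_boundary.1 (hS₁.subset_boundary htri hc₁.le hF₁)).2.1 ha₁
  refine hS₁.canComplement htri hc₁.le ha₁ ((Set.ncard_le_ncard hN).trans ?_)
  have := Set.ncard_le_ncard_of_injOn (s := (fun v => s(a, v)) ⁻¹' (F₂ \ F₁)) (fun v => s(a, v)) (fun _ hv => hv)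
    (fun _ _ _ _ h => Sym2.congr_right.1 h) (t := F₂ \ F₁)
  have := Set.ncard_union_le A₂ ((fun v => s(a, v)) ⁻¹' (F₂ \ F₁))
  have := ncard_add_ncard_sdiff_le_one hc₂ hF
  omega

end Uncrossing

theorem stmt_8_general [Fintype V] (G : SimpleGraph V)
    (htri : IsTriconnected G)
    (A₁ A₂ : Set V) (E₁ E₂ : Set (Sym2 V))
    (hcard₁ : A₁.ncard + E₁.ncard = 3) (hcut₁ : CutVE G A₁ E₁)
    (hcard₂ : A₂.ncard + E₂.ncard = 3) (hcut₂ : CutVE G A₂ E₂)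
    (hne : A₁ ≠ A₂ ∨ E₁ ≠ E₂)
    (hcommon : ∃ e f : Sym2 V, e ≠ f ∧ e ∈ E₁ ∧ e ∈ E₂ ∧ f ∈ E₁ ∧ f ∈ E₂) :
    CanComplement G A₁ E₁ ∨ CanComplement G A₂ E₂ := by
  obtain ⟨e, f, hef, he₁, he₂, hf₁, hf₂⟩ := hcommon
  have hF : 2 ≤ (E₁ ∩ E₂).ncard := by
    rw [← Set.ncard_pair hef]
    exact Set.ncard_le_ncard (Set.pair_subset ⟨he₁, he₂⟩ ⟨hf₁, hf₂⟩)
  obtain ⟨X₁, h₁⟩ := exists_isSide_of_cutVE (htri.compl_nonempty (by omega)) hcut₁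
  obtain ⟨X₂, h₂⟩ := exists_isSide_of_cutVE (htri.compl_nonempty (by omega)) hcut₂
  by_cases hA₁ : (A₁ \ A₂).Nonempty
  · exact Or.inl (canComplement_of_mem_sdiff htri h₁ h₂ hcard₁ hcard₂ hF hA₁.some_mem)
  by_cases hA₂ : (A₂ \ A₁).Nonempty
  · exact Or.inr (canComplement_of_mem_sdiff htri h₂ h₁ hcard₂ hcard₁
      (Set.inter_comm E₁ E₂ ▸ hF) hA₂.some_mem)
  rw [Set.not_nonempty_iff_eq_empty, Set.sdiff_eq_empty] at hA₁ hA₂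
  obtain rfl : A₁ = A₂ := hA₁.antisymm hA₂
  exact absurd (h₁.edges_eq_of_two_le_ncard_inter htri h₂ hcard₁ hcard₂ hF) (by simpa using hne)

/-- Corollary `ll32c1`: two distinct cuts sharing at least two edges cannot both
be maximal. -/
theorem stmt_8 [Fintype V] (G : SimpleGraph V)
    (htri : IsTriconnected G) (hbig : 6 < Fintype.card V)
    (A₁ A₂ : Set V) (E₁ E₂ : Set (Sym2 V))
    (hcard₁ : A₁.ncard + E₁.ncard = 3) (hE₁sub : E₁ ⊆ G.edgeSet)
    (hE₁ne : E₁.Nonempty) (hcut₁ : CutVE G A₁ E₁)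
    (hcard₂ : A₂.ncard + E₂.ncard = 3) (hE₂sub : E₂ ⊆ G.edgeSet)
    (hE₂ne : E₂.Nonempty) (hcut₂ : CutVE G A₂ E₂)
    (hne : A₁ ≠ A₂ ∨ E₁ ≠ E₂)
    (hcommon : ∃ e f : Sym2 V, e ≠ f ∧ e ∈ E₁ ∧ e ∈ E₂ ∧ f ∈ E₁ ∧ f ∈ E₂) :
    CanComplement G A₁ E₁ ∨ CanComplement G A₂ E₂ :=
  stmt_8_general G htri A₁ A₂ E₁ E₂ hcard₁ hcut₁ hcard₂ hcut₂ hne hcommon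

end Paper
end

section
/- Let M = {x_1x_2, y_1, z_2} and N = {x_1x_2, y_2, z_1} be cuts in 𝔐_1(G) sharing the edge x_1x_2, where y_1, y_2, z_1, z_2 are four distinct vertices. Let H_1 and H_2 be the connected components of G − M with x_1 ∈ H_1 and x_2 ∈ H_2, and let K_1 and K_2 be the connected components of G − N with x_1 ∈ K_1 and x_2 ∈ K_2. Suppose the cuts M and N are dependent, positioned so that z_1 ∈ H_1, y_2 ∈ H_2, y_1 ∈ K_1 and z_2 ∈ K_2. Then y_1y_2 ∈ E(G), z_1z_2 ∈ E(G), and {x_1x_2, y_1y_2, z_1z_2} ∈ 𝔐_3(G); that is, deleting the three edges x_1x_2, y_1y_2, z_1z_2 from G yields a disconnected graph. -/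
namespace Paper

variable {V : Type*}

section Aux
variable {V : Type*}

lemma reachVE_refl {G : SimpleGraph V} {A : Set V} {E : Set (Sym2 V)} {x : V}
    (hx : x ∉ A) : ReachVE G A E x x := ⟨hx, hx, SimpleGraph.Reachable.refl _⟩

lemma reachVE_symm {G : SimpleGraph V} {A : Set V} {E : Set (Sym2 V)} {x y : V}
    (h : ReachVE G A E x y) : ReachVE G A E y x := by
  obtain ⟨hx, hy, h⟩ := h; exact ⟨hy, hx, h.symm⟩

lemma reachVE_notA_left {G : SimpleGraph V} {A : Set V} {E : Set (Sym2 V)} {x y : V}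
    (h : ReachVE G A E x y) : x ∉ A := h.1

lemma reachVE_notA_right {G : SimpleGraph V} {A : Set V} {E : Set (Sym2 V)} {x y : V}
    (h : ReachVE G A E x y) : y ∉ A := h.2.1

lemma reachVE_trans {G : SimpleGraph V} {A : Set V} {E : Set (Sym2 V)} {x y z : V}
    (h : ReachVE G A E x y) (h' : ReachVE G A E y z) : ReachVE G A E x z := by
  obtain ⟨hx, hy, h⟩ := h; obtain ⟨hy', hz, h'⟩ := h'
  exact ⟨hx, hz, h.trans h'⟩

lemma reachVE_adj {G : SimpleGraph V} {A : Set V} {E : Set (Sym2 V)} {x y : V}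
    (hx : x ∉ A) (hy : y ∉ A) (hadj : G.Adj x y) (he : s(x, y) ∉ E) :
    ReachVE G A E x y := by
  refine ⟨hx, hy, SimpleGraph.Adj.reachable ?_⟩
  show (G.deleteEdges E).Adj x y
  exact SimpleGraph.deleteEdges_adj.mpr ⟨hadj, he⟩

lemma reachVE_step {G : SimpleGraph V} {A : Set V} {E : Set (Sym2 V)} {c u w : V}
    (h : ReachVE G A E c u) (hw : w ∉ A) (hadj : G.Adj u w) (he : s(u, w) ∉ E) :
    ReachVE G A E c w :=
  reachVE_trans h (reachVE_adj (reachVE_notA_right h) hw hadj he)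

lemma reach_closure {G : SimpleGraph V} {A : Set V} (P : V → Prop)
    (hP : ∀ u w, P u → u ∉ A → w ∉ A → G.Adj u w → P w)
    {a b : (Aᶜ : Set V)} (h : (G.induce (Aᶜ : Set V)).Reachable a b) (ha : P a.1) : P b.1 := by
  obtain ⟨w⟩ := h
  induction w with
  | nil => exact ha
  | @cons u v c hadj p ih => exact ih (hP u.1 v.1 ha u.2 v.2 hadj)

lemma reach_dichotomy {G : SimpleGraph V} {A : Set V} {x₁ x₂ : V}
    (hconn : (G.induce (Aᶜ : Set V)).Connected)
    (h1 : x₁ ∉ A) (h2 : x₂ ∉ A) {v : V} (hv : v ∉ A) :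
    ReachVE G A {s(x₁, x₂)} v x₁ ∨ ReachVE G A {s(x₁, x₂)} v x₂ := by
  have hr : (G.induce (Aᶜ : Set V)).Reachable ⟨x₁, h1⟩ ⟨v, hv⟩ := hconn.preconnected _ _
  have key := reach_closure
    (P := fun w => ReachVE G A {s(x₁, x₂)} w x₁ ∨ ReachVE G A {s(x₁, x₂)} w x₂)
    ?_ hr (Or.inl (reachVE_refl h1))
  · exact key
  · intro u w hu huA hwA hadj
    by_cases he : s(u, w) = s(x₁, x₂)
    · rw [Sym2.eq_iff] at he
      rcases he with ⟨rfl, rfl⟩ | ⟨rfl, rfl⟩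
      · exact Or.inr (reachVE_refl hwA)
      · exact Or.inl (reachVE_refl hwA)
    · have hwu : ReachVE G A {s(x₁, x₂)} w u :=
        reachVE_adj hwA huA hadj.symm (by simpa [Sym2.eq_swap] using he)
      exact hu.imp (reachVE_trans hwu) (reachVE_trans hwu)

lemma sep_of_cut {G : SimpleGraph V} {A : Set V} {x₁ x₂ : V}
    (hconn : (G.induce (Aᶜ : Set V)).Connected)
    (hcut : CutVE G A {s(x₁, x₂)}) (h1 : x₁ ∉ A) (h2 : x₂ ∉ A) :
    ¬ ReachVE G A {s(x₁, x₂)} x₁ x₂ := by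
  intro hr
  apply hcut
  rw [SimpleGraph.connected_iff]
  refine ⟨?_, ⟨⟨x₁, h1⟩⟩⟩
  intro a b
  have ha := reach_dichotomy hconn h1 h2 a.2
  have hb := reach_dichotomy hconn h1 h2 b.2
  have hab : ReachVE G A {s(x₁, x₂)} a.1 b.1 := by
    rcases ha with ha | ha <;> rcases hb with hb | hb
    · exact reachVE_trans ha (reachVE_symm hb)
    · exact reachVE_trans ha (reachVE_trans hr (reachVE_symm hb))
    · exact reachVE_trans ha (reachVE_trans (reachVE_symm hr) (reachVE_symm hb))
    · exact reachVE_trans ha (reachVE_symm hb)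
  obtain ⟨ha', hb', r⟩ := hab
  have e1 : a = ⟨a.1, ha'⟩ := Subtype.ext rfl
  have e2 : b = ⟨b.1, hb'⟩ := Subtype.ext rfl
  rw [e1, e2]; exact r

end Aux

theorem stmt_9' [Fintype V] (G : SimpleGraph V)
    (htri : IsTriconnected G) (hbig : 6 < Fintype.card V)
    (x₁ x₂ y₁ y₂ z₁ z₂ : V) (hx : G.Adj x₁ x₂)
    (hy₁y₂ : y₁ ≠ y₂) (hy₁z₁ : y₁ ≠ z₁) (hy₁z₂ : y₁ ≠ z₂)
    (hy₂z₁ : y₂ ≠ z₁) (hy₂z₂ : y₂ ≠ z₂) (hz₁z₂ : z₁ ≠ z₂)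
    (hM : CutVE G {y₁, z₂} {s(x₁, x₂)})
    (hN : CutVE G {y₂, z₁} {s(x₁, x₂)})
    (hz₁H₁ : ReachVE G {y₁, z₂} {s(x₁, x₂)} x₁ z₁)
    (hy₂H₂ : ReachVE G {y₁, z₂} {s(x₁, x₂)} x₂ y₂)
    (hy₁K₁ : ReachVE G {y₂, z₁} {s(x₁, x₂)} x₁ y₁)
    (hz₂K₂ : ReachVE G {y₂, z₁} {s(x₁, x₂)} x₂ z₂) :
    G.Adj y₁ y₂ ∧ G.Adj z₁ z₂ ∧
      CutVE G (∅ : Set V) {s(x₁, x₂), s(y₁, y₂), s(z₁, z₂)} := by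
  classical
  -- basic non-membership facts
  have hx₁M : x₁ ∉ ({y₁, z₂} : Set V) := reachVE_notA_left hz₁H₁
  have hz₁M : z₁ ∉ ({y₁, z₂} : Set V) := reachVE_notA_right hz₁H₁
  have hx₂M : x₂ ∉ ({y₁, z₂} : Set V) := reachVE_notA_left hy₂H₂
  have hy₂M : y₂ ∉ ({y₁, z₂} : Set V) := reachVE_notA_right hy₂H₂
  have hx₁N : x₁ ∉ ({y₂, z₁} : Set V) := reachVE_notA_left hy₁K₁
  have hy₁N : y₁ ∉ ({y₂, z₁} : Set V) := reachVE_notA_right hy₁K₁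
  have hx₂N : x₂ ∉ ({y₂, z₁} : Set V) := reachVE_notA_left hz₂K₂
  have hz₂N : z₂ ∉ ({y₂, z₁} : Set V) := reachVE_notA_right hz₂K₂
  simp only [Set.mem_insert_iff, Set.mem_singleton_iff, not_or] at hx₁M hz₁M hx₂M hy₂M hx₁N hy₁N hx₂N hz₂N
  obtain ⟨hx₁y₁, hx₁z₂⟩ := hx₁M
  obtain ⟨hz₁y₁, hz₁z₂'⟩ := hz₁M
  obtain ⟨hx₂y₁, hx₂z₂⟩ := hx₂M
  obtain ⟨hy₂y₁, hy₂z₂'⟩ := hy₂M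
  obtain ⟨hx₁y₂, hx₁z₁⟩ := hx₁N
  obtain ⟨hy₁y₂', hy₁z₁'⟩ := hy₁N
  obtain ⟨hx₂y₂, hx₂z₁⟩ := hx₂N
  obtain ⟨hz₂y₂, hz₂z₁⟩ := hz₂N
  have memM : ∀ v : V, v ≠ y₁ → v ≠ z₂ → v ∉ ({y₁, z₂} : Set V) := by
    intro v h1 h2; simp [h1, h2]
  have memN : ∀ v : V, v ≠ y₂ → v ≠ z₁ → v ∉ ({y₂, z₁} : Set V) := by
    intro v h1 h2; simp [h1, h2]
  have hx₁AM := memM x₁ hx₁y₁ hx₁z₂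
  have hx₂AM := memM x₂ hx₂y₁ hx₂z₂
  have hx₁AN := memN x₁ hx₁y₂ hx₁z₁
  have hx₂AN := memN x₂ hx₂y₂ hx₂z₁
  -- connectivity of the graphs minus two vertices
  have hconnM : (G.induce (({y₁, z₂} : Set V)ᶜ)).Connected :=
    htri.2 _ (Set.ncard_pair hy₁z₂).le
  have hconnN : (G.induce (({y₂, z₁} : Set V)ᶜ)).Connected :=
    htri.2 _ (Set.ncard_pair hy₂z₁).le
  -- separation
  have sepM : ¬ ReachVE G {y₁, z₂} {s(x₁, x₂)} x₁ x₂ := sep_of_cut hconnM hM hx₁AM hx₂AM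
  have sepN : ¬ ReachVE G {y₂, z₁} {s(x₁, x₂)} x₁ x₂ := sep_of_cut hconnN hN hx₁AN hx₂AN
  have notMboth : ∀ v, ReachVE G {y₁, z₂} {s(x₁, x₂)} x₁ v →
      ReachVE G {y₁, z₂} {s(x₁, x₂)} x₂ v → False :=
    fun v h1 h2 => sepM (reachVE_trans h1 (reachVE_symm h2))
  have notNboth : ∀ v, ReachVE G {y₂, z₁} {s(x₁, x₂)} x₁ v →
      ReachVE G {y₂, z₁} {s(x₁, x₂)} x₂ v → False :=
    fun v h1 h2 => sepN (reachVE_trans h1 (reachVE_symm h2))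
  -- dichotomies
  have dM : ∀ v : V, v ∉ ({y₁, z₂} : Set V) →
      ReachVE G {y₁, z₂} {s(x₁, x₂)} x₁ v ∨ ReachVE G {y₁, z₂} {s(x₁, x₂)} x₂ v :=
    fun v hv => (reach_dichotomy hconnM hx₁AM hx₂AM hv).imp reachVE_symm reachVE_symm
  have dN : ∀ v : V, v ∉ ({y₂, z₁} : Set V) →
      ReachVE G {y₂, z₁} {s(x₁, x₂)} x₁ v ∨ ReachVE G {y₂, z₁} {s(x₁, x₂)} x₂ v :=
    fun v hv => (reach_dichotomy hconnN hx₁AN hx₂AN hv).imp reachVE_symm reachVE_symm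
  -- edge different from x₁x₂
  have edge_ne : ∀ u w : V, u ≠ x₁ → u ≠ x₂ → s(u, w) ∉ ({s(x₁, x₂)} : Set (Sym2 V)) := by
    intro u w h1 h2 h
    rw [Set.mem_singleton_iff, Sym2.eq_iff] at h
    tauto
  -- empty corner H₂ ∩ K₁
  have corner1 : ∀ v, ReachVE G {y₁, z₂} {s(x₁, x₂)} x₂ v →
      ReachVE G {y₂, z₁} {s(x₁, x₂)} x₁ v → False := by
    intro v hH2 hK1
    have hvy₁ : v ≠ y₁ := fun h => (reachVE_notA_right hH2) (by simp [h])
    have hvy₂ : v ≠ y₂ := fun h => (reachVE_notA_right hK1) (by simp [h])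
    have hconn := htri.2 {y₁, y₂} (Set.ncard_pair hy₁y₂).le
    have hvA : v ∈ (({y₁, y₂} : Set V)ᶜ) := by simp [hvy₁, hvy₂]
    have hx₁A : x₁ ∈ (({y₁, y₂} : Set V)ᶜ) := by simp [hx₁y₁, hx₁y₂]
    have hr : (G.induce (({y₁, y₂} : Set V)ᶜ)).Reachable ⟨v, hvA⟩ ⟨x₁, hx₁A⟩ :=
      hconn.preconnected _ _
    have key := reach_closure
      (P := fun w => ReachVE G {y₁, z₂} {s(x₁, x₂)} x₂ w ∧
        ReachVE G {y₂, z₁} {s(x₁, x₂)} x₁ w) ?_ hr ⟨hH2, hK1⟩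
    · exact notMboth x₁ (reachVE_refl hx₁AM) key.1
    · intro u w hu huA hwA hadj
      obtain ⟨hu2, hu1⟩ := hu
      simp only [Set.mem_compl_iff, Set.mem_insert_iff, Set.mem_singleton_iff, not_or] at hwA
      obtain ⟨hwy₁, hwy₂⟩ := hwA
      have hune1 : u ≠ x₁ := by
        intro h; rw [h] at hu2; exact notMboth x₁ (reachVE_refl hx₁AM) hu2
      have hune2 : u ≠ x₂ := by
        intro h; rw [h] at hu1; exact notNboth x₂ hu1 (reachVE_refl hx₂AN)
      have hedge := edge_ne u w hune1 hune2
      have hwz₂ : w ≠ z₂ := by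
        intro h; rw [h] at hadj hedge
        exact notNboth z₂ (reachVE_step hu1 (memN z₂ hz₂y₂ hz₂z₁) hadj hedge) hz₂K₂
      have hH2w := reachVE_step hu2 (memM w hwy₁ hwz₂) hadj hedge
      have hwz₁ : w ≠ z₁ := by
        intro h; rw [h] at hH2w
        exact notMboth z₁ hz₁H₁ hH2w
      exact ⟨hH2w, reachVE_step hu1 (memN w hwy₂ hwz₁) hadj hedge⟩
  -- empty corner H₁ ∩ K₂
  have corner2 : ∀ v, ReachVE G {y₁, z₂} {s(x₁, x₂)} x₁ v →
      ReachVE G {y₂, z₁} {s(x₁, x₂)} x₂ v → False := by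
    intro v hH1 hK2
    have hvz₂ : v ≠ z₂ := fun h => (reachVE_notA_right hH1) (by simp [h])
    have hvz₁ : v ≠ z₁ := fun h => (reachVE_notA_right hK2) (by simp [h])
    have hconn := htri.2 {z₁, z₂} (Set.ncard_pair hz₁z₂).le
    have hvA : v ∈ (({z₁, z₂} : Set V)ᶜ) := by simp [hvz₁, hvz₂]
    have hx₂A : x₂ ∈ (({z₁, z₂} : Set V)ᶜ) := by simp [hx₂z₁, hx₂z₂]
    have hr : (G.induce (({z₁, z₂} : Set V)ᶜ)).Reachable ⟨v, hvA⟩ ⟨x₂, hx₂A⟩ :=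
      hconn.preconnected _ _
    have key := reach_closure
      (P := fun w => ReachVE G {y₁, z₂} {s(x₁, x₂)} x₁ w ∧
        ReachVE G {y₂, z₁} {s(x₁, x₂)} x₂ w) ?_ hr ⟨hH1, hK2⟩
    · exact notMboth x₂ key.1 (reachVE_refl hx₂AM)
    · intro u w hu huA hwA hadj
      obtain ⟨hu1, hu2⟩ := hu
      simp only [Set.mem_compl_iff, Set.mem_insert_iff, Set.mem_singleton_iff, not_or] at hwA
      obtain ⟨hwz₁, hwz₂⟩ := hwA
      have hune1 : u ≠ x₁ := by
        intro h; rw [h] at hu2; exact notNboth x₁ (reachVE_refl hx₁AN) hu2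
      have hune2 : u ≠ x₂ := by
        intro h; rw [h] at hu1; exact notMboth x₂ hu1 (reachVE_refl hx₂AM)
      have hedge := edge_ne u w hune1 hune2
      have hwy₁ : w ≠ y₁ := by
        intro h; rw [h] at hadj hedge
        exact notNboth y₁ hy₁K₁ (reachVE_step hu2 (memN y₁ hy₁y₂' hy₁z₁') hadj hedge)
      have hH1w := reachVE_step hu1 (memM w hwy₁ hwz₂) hadj hedge
      have hwy₂ : w ≠ y₂ := by
        intro h; rw [h] at hH1w
        exact notMboth y₂ hH1w hy₂H₂
      exact ⟨hH1w, reachVE_step hu2 (memN w hwy₂ hwz₁) hadj hedge⟩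
  -- y₁y₂ is an edge
  have hAdjY : G.Adj y₁ y₂ := by
    by_contra hnadj
    have hconn := htri.2 {x₁, z₁} (Set.ncard_pair (fun h => hx₁z₁ h)).le
    have hy₁A : y₁ ∈ (({x₁, z₁} : Set V)ᶜ) := by simp [Ne.symm hx₁y₁, hy₁z₁]
    have hx₂A : x₂ ∈ (({x₁, z₁} : Set V)ᶜ) := by simp [hx.ne', hx₂z₁]
    have hr : (G.induce (({x₁, z₁} : Set V)ᶜ)).Reachable ⟨y₁, hy₁A⟩ ⟨x₂, hx₂A⟩ :=
      hconn.preconnected _ _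
    have key := reach_closure
      (P := fun w => w = y₁ ∨ (ReachVE G {y₁, z₂} {s(x₁, x₂)} x₁ w ∧
        ReachVE G {y₂, z₁} {s(x₁, x₂)} x₁ w)) ?_ hr (Or.inl rfl)
    · rcases key with h | ⟨h, _⟩
      · exact hx₂y₁ h
      · exact notMboth x₂ h (reachVE_refl hx₂AM)
    · intro u w hu huA hwA hadj
      simp only [Set.mem_compl_iff, Set.mem_insert_iff, Set.mem_singleton_iff, not_or] at hwA
      obtain ⟨hwx₁, hwz₁⟩ := hwA
      rcases hu with hu | ⟨hu1, hk1⟩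
      · -- u = y₁
        rw [hu] at hadj
        have hedge := edge_ne y₁ w (Ne.symm hx₁y₁) (Ne.symm hx₂y₁)
        have hwy₂ : w ≠ y₂ := by intro h; rw [h] at hadj; exact hnadj hadj
        have hwz₂ : w ≠ z₂ := by
          intro h; rw [h] at hadj hedge
          exact notNboth z₂ (reachVE_step hy₁K₁ (memN z₂ hz₂y₂ hz₂z₁) hadj hedge) hz₂K₂
        have hK1w := reachVE_step hy₁K₁ (memN w hwy₂ hwz₁) hadj hedge
        have hwy₁ : w ≠ y₁ := hadj.ne'
        have hH1w : ReachVE G {y₁, z₂} {s(x₁, x₂)} x₁ w := by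
          rcases dM w (memM w hwy₁ hwz₂) with h | h
          · exact h
          · exact (corner1 w h hK1w).elim
        exact Or.inr ⟨hH1w, hK1w⟩
      · simp only [Set.mem_compl_iff, Set.mem_insert_iff, Set.mem_singleton_iff, not_or] at huA
        have hune2 : u ≠ x₂ := by
          intro h; rw [h] at hu1; exact notMboth x₂ hu1 (reachVE_refl hx₂AM)
        have hedge := edge_ne u w huA.1 hune2
        by_cases hwy₁ : w = y₁
        · exact Or.inl hwy₁
        have hwz₂ : w ≠ z₂ := by
          intro h; rw [h] at hadj hedge
          exact notNboth z₂ (reachVE_step hk1 (memN z₂ hz₂y₂ hz₂z₁) hadj hedge) hz₂K₂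
        have hH1w := reachVE_step hu1 (memM w hwy₁ hwz₂) hadj hedge
        have hwy₂ : w ≠ y₂ := by
          intro h; rw [h] at hH1w; exact notMboth y₂ hH1w hy₂H₂
        exact Or.inr ⟨hH1w, reachVE_step hk1 (memN w hwy₂ hwz₁) hadj hedge⟩
  -- z₁z₂ is an edge
  have hAdjZ : G.Adj z₁ z₂ := by
    by_contra hnadj
    have hconn := htri.2 {x₁, y₁} (Set.ncard_pair (fun h => hx₁y₁ h)).le
    have hz₁A : z₁ ∈ (({x₁, y₁} : Set V)ᶜ) := by simp [Ne.symm hx₁z₁, Ne.symm hy₁z₁]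
    have hx₂A : x₂ ∈ (({x₁, y₁} : Set V)ᶜ) := by simp [hx.ne', hx₂y₁]
    have hr : (G.induce (({x₁, y₁} : Set V)ᶜ)).Reachable ⟨z₁, hz₁A⟩ ⟨x₂, hx₂A⟩ :=
      hconn.preconnected _ _
    have key := reach_closure
      (P := fun w => w = z₁ ∨ (ReachVE G {y₁, z₂} {s(x₁, x₂)} x₁ w ∧
        ReachVE G {y₂, z₁} {s(x₁, x₂)} x₁ w)) ?_ hr (Or.inl rfl)
    · rcases key with h | ⟨h, _⟩
      · exact hx₂z₁ h
      · exact notMboth x₂ h (reachVE_refl hx₂AM)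
    · intro u w hu huA hwA hadj
      simp only [Set.mem_compl_iff, Set.mem_insert_iff, Set.mem_singleton_iff, not_or] at hwA
      obtain ⟨hwx₁, hwy₁⟩ := hwA
      rcases hu with hu | ⟨hu1, hk1⟩
      · -- u = z₁
        rw [hu] at hadj
        have hedge := edge_ne z₁ w (Ne.symm hx₁z₁) (Ne.symm hx₂z₁)
        have hwz₂ : w ≠ z₂ := by intro h; rw [h] at hadj; exact hnadj hadj
        have hH1w := reachVE_step hz₁H₁ (memM w hwy₁ hwz₂) hadj hedge
        have hwy₂ : w ≠ y₂ := by
          intro h; rw [h] at hH1w; exact notMboth y₂ hH1w hy₂H₂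
        have hwz₁ : w ≠ z₁ := hadj.ne'
        have hK1w : ReachVE G {y₂, z₁} {s(x₁, x₂)} x₁ w := by
          rcases dN w (memN w hwy₂ hwz₁) with h | h
          · exact h
          · exact (corner2 w hH1w h).elim
        exact Or.inr ⟨hH1w, hK1w⟩
      · simp only [Set.mem_compl_iff, Set.mem_insert_iff, Set.mem_singleton_iff, not_or] at huA
        have hune2 : u ≠ x₂ := by
          intro h; rw [h] at hu1; exact notMboth x₂ hu1 (reachVE_refl hx₂AM)
        have hedge := edge_ne u w huA.1 hune2
        by_cases hwz₁ : w = z₁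
        · exact Or.inl hwz₁
        have hwz₂ : w ≠ z₂ := by
          intro h; rw [h] at hadj hedge
          exact notNboth z₂ (reachVE_step hk1 (memN z₂ hz₂y₂ hz₂z₁) hadj hedge) hz₂K₂
        have hH1w := reachVE_step hu1 (memM w hwy₁ hwz₂) hadj hedge
        have hwy₂ : w ≠ y₂ := by
          intro h; rw [h] at hH1w; exact notMboth y₂ hH1w hy₂H₂
        exact Or.inr ⟨hH1w, reachVE_step hk1 (memN w hwy₂ hwz₁) hadj hedge⟩
  refine ⟨hAdjY, hAdjZ, ?_⟩
  -- the three edges form a cut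
  intro hcon
  have hx₁c : x₁ ∈ ((∅ : Set V)ᶜ) := by simp
  have hx₂c : x₂ ∈ ((∅ : Set V)ᶜ) := by simp
  have hr : (DelVE G ∅ {s(x₁, x₂), s(y₁, y₂), s(z₁, z₂)}).Reachable ⟨x₁, hx₁c⟩ ⟨x₂, hx₂c⟩ :=
    hcon.preconnected _ _
  have key := reach_closure (G := G.deleteEdges {s(x₁, x₂), s(y₁, y₂), s(z₁, z₂)})
    (A := (∅ : Set V))
    (P := fun w => (ReachVE G {y₁, z₂} {s(x₁, x₂)} x₁ w ∧
      ReachVE G {y₂, z₁} {s(x₁, x₂)} x₁ w) ∨ w = y₁ ∨ w = z₁)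
    ?_ hr (Or.inl ⟨reachVE_refl hx₁AM, reachVE_refl hx₁AN⟩)
  · rcases key with ⟨h, _⟩ | h | h
    · exact notMboth x₂ h (reachVE_refl hx₂AM)
    · exact hx₂y₁ h
    · exact hx₂z₁ h
  · intro u w hu huA hwA hadj
    rw [SimpleGraph.deleteEdges_adj] at hadj
    obtain ⟨hadj, hE⟩ := hadj
    simp only [Set.mem_insert_iff, Set.mem_singleton_iff, not_or] at hE
    obtain ⟨hE1, hE2, hE3⟩ := hE
    have hedge : s(u, w) ∉ ({s(x₁, x₂)} : Set (Sym2 V)) := by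
      rw [Set.mem_singleton_iff]; exact hE1
    rcases hu with ⟨hu1, hk1⟩ | hu | hu
    · by_cases hwy₁ : w = y₁
      · exact Or.inr (Or.inl hwy₁)
      by_cases hwz₁ : w = z₁
      · exact Or.inr (Or.inr hwz₁)
      have hwz₂ : w ≠ z₂ := by
        intro h; rw [h] at hadj hedge
        exact notNboth z₂ (reachVE_step hk1 (memN z₂ hz₂y₂ hz₂z₁) hadj hedge) hz₂K₂
      have hH1w := reachVE_step hu1 (memM w hwy₁ hwz₂) hadj hedge
      have hwy₂ : w ≠ y₂ := by
        intro h; rw [h] at hH1w; exact notMboth y₂ hH1w hy₂H₂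
      exact Or.inl ⟨hH1w, reachVE_step hk1 (memN w hwy₂ hwz₁) hadj hedge⟩
    · -- u = y₁
      rw [hu] at hadj hedge hE2
      have hwy₂ : w ≠ y₂ := by intro h; rw [h] at hE2; exact hE2 rfl
      by_cases hwz₁ : w = z₁
      · exact Or.inr (Or.inr hwz₁)
      have hwz₂ : w ≠ z₂ := by
        intro h; rw [h] at hadj hedge
        exact notNboth z₂ (reachVE_step hy₁K₁ (memN z₂ hz₂y₂ hz₂z₁) hadj hedge) hz₂K₂
      have hK1w := reachVE_step hy₁K₁ (memN w hwy₂ hwz₁) hadj hedge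
      have hH1w : ReachVE G {y₁, z₂} {s(x₁, x₂)} x₁ w := by
        rcases dM w (memM w hadj.ne' hwz₂) with h | h
        · exact h
        · exact (corner1 w h hK1w).elim
      exact Or.inl ⟨hH1w, hK1w⟩
    · -- u = z₁
      rw [hu] at hadj hedge hE3
      have hwz₂ : w ≠ z₂ := by intro h; rw [h] at hE3; exact hE3 rfl
      by_cases hwy₁ : w = y₁
      · exact Or.inr (Or.inl hwy₁)
      have hH1w := reachVE_step hz₁H₁ (memM w hwy₁ hwz₂) hadj hedge
      have hwy₂ : w ≠ y₂ := by
        intro h; rw [h] at hH1w; exact notMboth y₂ hH1w hy₂H₂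
      have hK1w : ReachVE G {y₂, z₁} {s(x₁, x₂)} x₁ w := by
        rcases dN w (memN w hwy₂ hadj.ne') with h | h
        · exact h
        · exact (corner2 w hH1w h).elim
      exact Or.inl ⟨hH1w, hK1w⟩

/-- Lemma `ll33`: two dependent cuts of `𝔐₁(G)` sharing the edge `x₁x₂` yield an
all-edge cut `{x₁x₂, y₁y₂, z₁z₂} ∈ 𝔐₃(G)`. -/
theorem stmt_9 [Fintype V] (G : SimpleGraph V)
    (htri : IsTriconnected G) (hbig : 6 < Fintype.card V)
    (x₁ x₂ y₁ y₂ z₁ z₂ : V) (hx : G.Adj x₁ x₂)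
    (hy₁y₂ : y₁ ≠ y₂) (hy₁z₁ : y₁ ≠ z₁) (hy₁z₂ : y₁ ≠ z₂)
    (hy₂z₁ : y₂ ≠ z₁) (hy₂z₂ : y₂ ≠ z₂) (hz₁z₂ : z₁ ≠ z₂)
    (hM : CutVE G {y₁, z₂} {s(x₁, x₂)})
    (hN : CutVE G {y₂, z₁} {s(x₁, x₂)})
    (hz₁H₁ : ReachVE G {y₁, z₂} {s(x₁, x₂)} x₁ z₁)
    (hy₂H₂ : ReachVE G {y₁, z₂} {s(x₁, x₂)} x₂ y₂)
    (hy₁K₁ : ReachVE G {y₂, z₁} {s(x₁, x₂)} x₁ y₁)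
    (hz₂K₂ : ReachVE G {y₂, z₁} {s(x₁, x₂)} x₂ z₂) :
    G.Adj y₁ y₂ ∧ G.Adj z₁ z₂ ∧
      CutVE G (∅ : Set V) {s(x₁, x₂), s(y₁, y₂), s(z₁, z₂)} := by
  exact stmt_9' G htri hbig x₁ x₂ y₁ y₂ z₁ z₂ hx hy₁y₂ hy₁z₁ hy₁z₂ hy₂z₁ hy₂z₂ hz₁z₂ hM hN hz₁H₁ hy₂H₂ hy₁K₁ hz₂K₂

end Paper
end

section
/- Let M be a nontrivial cut of G with vertex set W, let H_1 and H_2 be the two connected components of G − M, and suppose the boundary T^M_2 is a 3-cutset of G. Let S be a 3-cutset dependent with T^M_2 such that S ∩ (H_2 ∪ W) = {x}, and suppose S separates some vertex y ∈ T^M_2 from the other vertices of T^M_2 (i.e., y ∉ S and every vertex of T^M_2 \ (S ∪ {y}) lies in a connected component of G − S different from the component of y). Then x and y are adjacent and the cut M can be complemented by the edge xy. -/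
namespace Paper

variable {V : Type*}

/-! Let `C` be the component of `y` in `G − S`. Since `S` meets `H₂ ∪ W` only in `x`, and `S`
separates `y` from the rest of `T₂`, the set `(C ∩ H₂) \ {y}` can be left only through `x` and
`y`; by triconnectivity it is empty. This rules out `y ∈ H₂`, so `y ∈ A` and `x` is the only
neighbour of `y` in `H₂`. Hence `H₂` is still a component after `y` is replaced by the edge
`xy`, and if `xy` were not an edge then `(A \ {y}, E)` would be a mixed cut of size two.
Triconnectivity excludes such cuts: replace each edge by its endpoint outside the component. -/

variable {G : SimpleGraph V} {A S Q H T : Set V} {E : Set (Sym2 V)} {u v w x y : V}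

/-- For `Q` disjoint from `A`: `Q` is a union of components of `G − (A ∪ E)`. -/
def IsClosedVE (G : SimpleGraph V) (A : Set V) (E : Set (Sym2 V)) (Q : Set V) : Prop :=
  ∀ p ∈ Q, ∀ v, G.Adj p v → v ∈ Q ∨ v ∈ A ∨ s(p, v) ∈ E

lemma reachOutside_iff_reachVE : ReachOutside G S u v ↔ ReachVE G S ∅ u v := by
  simp only [ReachOutside, ReachVE, DelVE, SimpleGraph.deleteEdges_empty]

lemma ReachVE.symm (h : ReachVE G A E u v) : ReachVE G A E v u :=
  let ⟨hu, hv, r⟩ := h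
  ⟨hv, hu, r.symm⟩

lemma ReachVE.trans (h₁ : ReachVE G A E u v) (h₂ : ReachVE G A E v w) : ReachVE G A E u w :=
  let ⟨hu, _, r₁⟩ := h₁
  let ⟨_, hw, r₂⟩ := h₂
  ⟨hu, hw, r₁.trans r₂⟩

lemma mem_compVE_self (hu : u ∉ A) : u ∈ compVE G A E u :=
  ⟨hu, hu, .rfl⟩

lemma notMem_of_mem_compVE (hv : v ∈ compVE G A E u) : v ∉ A :=
  hv.2.1

lemma IsClosedVE.mem_of_reachVE (hQ : IsClosedVE G A E Q) (hu : u ∈ Q)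
    (h : ReachVE G A E u v) : v ∈ Q := by
  obtain ⟨_, _, ⟨walk⟩⟩ := h
  suffices ∀ (a b : (Aᶜ : Set V)), (DelVE G A E).Walk a b → a.1 ∈ Q → b.1 ∈ Q from
    this _ _ walk hu
  intro a b walk
  induction walk with
  | nil => exact id
  | @cons a c b hadj _ ih =>
    intro ha
    obtain ⟨hGadj, hE⟩ : G.Adj a c ∧ s(a.1, c.1) ∉ E := SimpleGraph.deleteEdges_adj.mp hadj
    rcases hQ a ha c hGadj with hc | hc | hc
    · exact ih hc
    · exact absurd hc c.2
    · exact absurd hc hE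

lemma isClosedVE_compVE : IsClosedVE G A E (compVE G A E u) := by
  intro p hp v hadj
  by_cases hvA : v ∈ A
  · exact .inr (.inl hvA)
  by_cases hE : s(p, v) ∈ E
  · exact .inr (.inr hE)
  refine .inl (hp.trans ⟨notMem_of_mem_compVE hp, hvA, SimpleGraph.Adj.reachable ?_⟩)
  exact SimpleGraph.deleteEdges_adj.mpr ⟨hadj, hE⟩

lemma IsCompVE.isClosedVE (hC : IsCompVE G A E Q) : IsClosedVE G A E Q := by
  obtain ⟨_, _, rfl⟩ := hC
  exact isClosedVE_compVE

lemma IsCompVE.notMem (hC : IsCompVE G A E Q) (hv : v ∈ Q) : v ∉ A := by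
  obtain ⟨_, _, rfl⟩ := hC
  exact notMem_of_mem_compVE hv

lemma IsCompVE.reachVE (hC : IsCompVE G A E Q) (hu : u ∈ Q) (hv : v ∈ Q) :
    ReachVE G A E u v := by
  obtain ⟨_, _, rfl⟩ := hC
  exact hu.symm.trans hv

lemma IsClosedVE.mem_of_connected (hQ : IsClosedVE G A E Q) (hconn : (DelVE G A E).Connected)
    (hu : u ∈ Q) (huA : u ∉ A) (hw : w ∉ A) : w ∈ Q :=
  hQ.mem_of_reachVE hu ⟨huA, hw, hconn.preconnected ⟨u, huA⟩ ⟨w, hw⟩⟩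

lemma IsClosedVE.cutVE (hQ : IsClosedVE G A E Q) (hu : u ∈ Q) (huA : u ∉ A) (hw : w ∉ Q)
    (hwA : w ∉ A) : CutVE G A E :=
  fun hconn => hw (hQ.mem_of_connected hconn hu huA hwA)

lemma ncard_outerEnds_le [Finite V] (Q : Set V) (E : Set (Sym2 V)) :
    {v | v ∉ Q ∧ ∃ p ∈ Q, s(p, v) ∈ E}.ncard ≤ E.ncard := by
  have hinner : ∀ v ∈ {v | v ∉ Q ∧ ∃ p ∈ Q, s(p, v) ∈ E}, ∃ p, p ∈ Q ∧ s(p, v) ∈ E :=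
    fun v hv => hv.2
  choose! f hfQ hfE using hinner
  refine Set.ncard_le_ncard_of_injOn (fun v => s(f v, v)) hfE ?_
  intro v hv w hw hvw
  rcases Sym2.eq_iff.mp hvw with ⟨-, h⟩ | ⟨h, -⟩
  · exact h
  · exact absurd (h ▸ hfQ v hv) hw.1

/-- Replacing every edge of `E` by its endpoint outside `Q` turns the mixed cut into a vertex
cut of size at most two. -/
lemma IsTriconnected.mem_of_isClosedVE [Fintype V] (hG : IsTriconnected G)
    (hQ : IsClosedVE G A E Q) (hAE : A.ncard + E.ncard ≤ 2) (hu : u ∈ Q) (huA : u ∉ A)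
    (hwA : w ∉ A) (hwE : ∀ e ∈ E, w ∉ e) : w ∈ Q := by
  set X := A ∪ {v | v ∉ Q ∧ ∃ p ∈ Q, s(p, v) ∈ E}
  have hX : X.ncard ≤ 2 :=
    (Set.ncard_union_le _ _).trans (by linarith [ncard_outerEnds_le Q E])
  have hQX : IsClosedVE G X ∅ Q := by
    intro p hp v hadj
    by_cases hvQ : v ∈ Q
    · exact .inl hvQ
    rcases hQ p hp v hadj with hv | hv | hv
    · exact absurd hv hvQ
    · exact .inr (.inl (.inl hv))
    · exact .inr (.inl (.inr ⟨hvQ, p, hp, hv⟩))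
  have hconn : (DelVE G X ∅).Connected := by
    simpa only [DelVE, SimpleGraph.deleteEdges_empty] using hG.2 X hX
  refine hQX.mem_of_connected hconn hu ?_ ?_
  · rintro (h | h)
    exacts [huA h, h.1 hu]
  · rintro (h | ⟨-, p, -, hp⟩)
    exacts [hwA h, hwE _ hp (Sym2.mem_mk_right p w)]

lemma IsTriconnected.exists_adj_ne_ne [Fintype V] (hG : IsTriconnected G) (v a b : V) :
    ∃ w, G.Adj v w ∧ w ≠ a ∧ w ≠ b := by
  classical
  by_contra! hN
  obtain ⟨s, -, hs⟩ : ∃ s ∈ Finset.univ, s ∉ ({a, b, v} : Finset V) := by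
    refine Finset.exists_mem_notMem_of_card_lt_card ?_
    calc ({a, b, v} : Finset V).card ≤ 3 := Finset.card_le_three
      _ < Finset.univ.card := by rw [Finset.card_univ]; linarith [hG.1]
  simp only [Finset.mem_insert, Finset.mem_singleton, not_or] at hs
  have hclosed : IsClosedVE G ({a, b} \ {v}) ∅ {v} := by
    rintro p rfl w hadj
    refine .inr (.inl ⟨?_, hadj.ne.symm⟩)
    by_cases hwa : w = a
    · exact .inl hwa
    · exact .inr (hN w hadj hwa)
  have hcard : ({a, b} \ {v} : Set V).ncard + (∅ : Set (Sym2 V)).ncard ≤ 2 := by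
    simpa using (Set.ncard_le_ncard Set.sdiff_subset).trans (Set.ncard_insert_le a {b})
  have hsv : s ∈ ({v} : Set V) := hG.mem_of_isClosedVE hclosed hcard rfl (fun h => h.2 rfl)
    (fun h => by rcases h.1 with rfl | rfl; exacts [hs.1 rfl, hs.2.1 rfl]) (by simp)
  exact hs.2.2 hsv

lemma IsClosedVE.mem_of_adj {p : V} (hQ : IsClosedVE G A ∅ Q) (hp : p ∈ Q) (hadj : G.Adj p v)
    (hv : v ∉ A) : v ∈ Q := by
  rcases hQ p hp v hadj with h | h | h
  exacts [h, absurd h hv, absurd h (Set.notMem_empty _)]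

lemma IsClosedVE.sdiff_singleton (hQ : IsClosedVE G A E Q) {F : Set (Sym2 V)}
    (hF : ∀ p ∈ Q, ∀ v, s(p, v) ∈ F → p = y) :
    IsClosedVE G (insert y A) (E \ F) (Q \ {y}) := by
  rintro p ⟨hpQ, hpy⟩ v hadj
  rcases hQ p hpQ v hadj with hv | hv | hv
  · by_cases hvy : v = y
    · exact .inr (.inl (.inl hvy))
    · exact .inl ⟨hv, hvy⟩
  · exact .inr (.inl (.inr hv))
  · exact .inr (.inr ⟨hv, fun h => hpy (hF p hpQ v h)⟩)

lemma IsClosedVE.sdiff_insert_edge (hQ : IsClosedVE G A E Q) (hy : ∀ p ∈ Q, G.Adj p y → p = x) :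
    IsClosedVE G (A \ {y}) (insert s(x, y) E) Q := by
  intro p hp v hadj
  rcases hQ p hp v hadj with hv | hv | hv
  · exact .inl hv
  · by_cases hvy : v = y
    · subst hvy
      rw [hy p hp hadj]
      exact .inr (.inr (Set.mem_insert _ _))
    · exact .inr (.inl ⟨hv, hvy⟩)
  · exact .inr (.inr (Set.mem_insert_of_mem _ hv))

lemma IsClosedVE.of_insert_of_not_adj (hQ : IsClosedVE G A (insert s(x, y) E) Q)
    (hxy : ¬ G.Adj x y) : IsClosedVE G A E Q := by
  intro p hp v hadj
  rcases hQ p hp v hadj with hv | hv | hv | hv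
  · exact .inl hv
  · exact .inr (.inl hv)
  · exact absurd ((G.adj_congr_of_sym2 hv).mp hadj) hxy
  · exact .inr (.inr hv)

lemma compVE_inter_subset_singleton [Fintype V] (hG : IsTriconnected G)
    (hH : IsClosedVE G A E H) (hAT : A ⊆ T) (hET : ∀ p ∈ H, ∀ v, s(p, v) ∈ E → p ∈ T)
    (hsep : ∀ z ∈ T, z ≠ y → z ∉ compVE G S ∅ y)
    (hSx : ∀ s ∈ S, s ≠ x → s ∉ H ∧ s ∉ A ∧ ∀ e ∈ E, s ∉ e)
    (hxS : x ∈ S) (hyS : y ∉ S) (hS : ∃ s ∈ S, s ≠ x) :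
    compVE G S ∅ y ∩ H ⊆ {y} := by
  rintro u ⟨huC, huH⟩
  by_contra huy
  obtain ⟨s, hsS, hsx⟩ := hS
  have hC : IsClosedVE G S ∅ (compVE G S ∅ y) := isClosedVE_compVE
  have hQ : IsClosedVE G {x, y} ∅ ((compVE G S ∅ y ∩ H) \ {y}) := by
    rintro p ⟨⟨hpC, hpH⟩, hpy⟩ v hadj
    by_cases hv : v ∈ ({x, y} : Set V)
    · exact .inr (.inl hv)
    simp only [Set.mem_insert_iff, Set.mem_singleton_iff, not_or] at hv
    rcases hH p hpH v hadj with hvH | hvA | hE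
    · exact .inl ⟨⟨hC.mem_of_adj hpC hadj fun h => (hSx v h hv.1).1 hvH, hvH⟩, hv.2⟩
    · exact absurd (hC.mem_of_adj hpC hadj fun h => (hSx v h hv.1).2.1 hvA)
        (hsep v (hAT hvA) hv.2)
    · exact absurd hpC (hsep p (hET p hpH v hE) hpy)
  have hcard : ({x, y} : Set V).ncard + (∅ : Set (Sym2 V)).ncard ≤ 2 := by
    simpa using Set.ncard_insert_le x {y}
  have hsQ := hG.mem_of_isClosedVE (u := u) (w := s) hQ hcard ⟨⟨huC, huH⟩, huy⟩
    (by rintro (rfl | rfl); exacts [notMem_of_mem_compVE huC hxS, huy rfl])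
    (by rintro (rfl | rfl); exacts [hsx rfl, hyS hsS]) (by simp)
  exact (hSx s hsS hsx).1 hsQ.1.2

lemma eq_singleton_of_compVE_inter_subset_singleton (hH : IsCompVE G A E H)
    (hSx : ∀ s ∈ S, s ≠ x → s ∉ H) (hyS : y ∉ S) (hCH : compVE G S ∅ y ∩ H ⊆ {y})
    (hxH : x ∉ H) (hyH : y ∈ H) : H = {y} := by
  have hQ : IsClosedVE G A E (compVE G S ∅ y ∩ H) := by
    rintro p ⟨hpC, hpH⟩ v hadj
    rcases hH.isClosedVE p hpH v hadj with hvH | hvA | hE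
    · refine .inl ⟨isClosedVE_compVE.mem_of_adj hpC hadj fun hvS => ?_, hvH⟩
      by_cases hvx : v = x
      exacts [hxH (hvx ▸ hvH), hSx v hvS hvx hvH]
    · exact .inr (.inl hvA)
    · exact .inr (.inr hE)
  refine Set.eq_singleton_iff_unique_mem.mpr ⟨hyH, fun v hv => hCH ?_⟩
  exact hQ.mem_of_reachVE ⟨mem_compVE_self hyS, hyH⟩ (hH.reachVE hyH hv)

lemma notMem_and_mk_mem_of_adj (hH : IsClosedVE G A E H) (hAT : A ⊆ T)
    (hsep : ∀ z ∈ T, z ≠ y → z ∉ compVE G S ∅ y)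
    (hSx : ∀ s ∈ S, s ≠ x → s ∉ H ∧ s ∉ A ∧ ∀ e ∈ E, s ∉ e) (hyS : y ∉ S)
    (hCH : compVE G S ∅ y ∩ H ⊆ {y}) (hyH : y ∈ H) (hadj : G.Adj y v) (hvx : v ≠ x) :
    v ∉ H ∧ s(y, v) ∈ E := by
  have hvS : v ∉ S := by
    intro hvS
    obtain ⟨hvH, hvA, hvE⟩ := hSx v hvS hvx
    rcases hH y hyH v hadj with h | h | h
    exacts [hvH h, hvA h, hvE _ h (Sym2.mem_mk_right y v)]
  have hvC : v ∈ compVE G S ∅ y := isClosedVE_compVE.mem_of_adj (mem_compVE_self hyS) hadj hvS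
  have hvH : v ∉ H := fun hvH => hadj.ne (hCH ⟨hvC, hvH⟩).symm
  refine ⟨hvH, ?_⟩
  rcases hH y hyH v hadj with h | h | h
  exacts [absurd h hvH, absurd hvC (hsep v (hAT h) hadj.ne.symm), h]

/-- If `x ∉ H`, all of `H` would lie in the component of `y`. If `x ∈ H`, the vertex `y` would
carry two edges of `E` leaving `H`, and trading them for `y` leaves a mixed cut of size two
around `H \ {y}`. -/
lemma notMem_of_compVE_inter_subset_singleton [Fintype V] (hG : IsTriconnected G)
    (hH : IsCompVE G A E H) (hnt : ∀ v, H ≠ {v}) (hcard : A.ncard + E.ncard = 3)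
    (hAT : A ⊆ T) (hsep : ∀ z ∈ T, z ≠ y → z ∉ compVE G S ∅ y)
    (hSx : ∀ s ∈ S, s ≠ x → s ∉ H ∧ s ∉ A ∧ ∀ e ∈ E, s ∉ e)
    (hxS : x ∈ S) (hyS : y ∉ S) (hS : ∃ s ∈ S, s ≠ x) (hCH : compVE G S ∅ y ∩ H ⊆ {y}) :
    y ∉ H := by
  intro hyH
  by_cases hxH : x ∉ H
  · exact hnt y (eq_singleton_of_compVE_inter_subset_singleton hH (fun s hs hsx => (hSx s hs hsx).1)
      hyS hCH hxH hyH)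
  rw [not_not] at hxH
  have hnbr : ∀ {v}, G.Adj y v → v ≠ x → v ∉ H ∧ s(y, v) ∈ E := fun hadj hvx =>
    notMem_and_mk_mem_of_adj hH.isClosedVE hAT hsep hSx hyS hCH hyH hadj hvx
  obtain ⟨v₁, hadj₁, hv₁x, -⟩ := hG.exists_adj_ne_ne y x x
  obtain ⟨v₂, hadj₂, hv₂x, hv₂₁⟩ := hG.exists_adj_ne_ne y x v₁
  obtain ⟨hv₁H, he₁⟩ := hnbr hadj₁ hv₁x
  obtain ⟨hv₂H, he₂⟩ := hnbr hadj₂ hv₂x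
  set F : Set (Sym2 V) := {s(y, v₁), s(y, v₂)}
  have hF : ∀ p ∈ H, ∀ v, s(p, v) ∈ F → p = y := by
    rintro p hp v (h | h) <;> rcases Sym2.eq_iff.mp h with ⟨h, -⟩ | ⟨h, -⟩
    exacts [h, absurd (h ▸ hp) hv₁H, h, absurd (h ▸ hp) hv₂H]
  have hFE : F ⊆ E := Set.insert_subset he₁ (Set.singleton_subset_iff.mpr he₂)
  have hF2 : F.ncard = 2 := Set.ncard_pair fun h => hv₂₁ (Sym2.congr_right.mp h).symm
  have hcard' : (insert y A).ncard + (E \ F).ncard ≤ 2 := by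
    have := Set.ncard_le_ncard hFE
    rw [Set.ncard_sdiff hFE]
    have := Set.ncard_insert_le y A
    omega
  obtain ⟨s, hsS, hsx⟩ := hS
  obtain ⟨hsH, hsA, hsE⟩ := hSx s hsS hsx
  have hxy : x ≠ y := fun h => hyS (h ▸ hxS)
  exact hsH (hG.mem_of_isClosedVE (hH.isClosedVE.sdiff_singleton hF) hcard' ⟨hxH, hxy⟩
    (by rintro (h | h); exacts [hxy h, hH.notMem hxH h])
    (by rintro (rfl | h); exacts [hyS hsS, hsA h]) (fun e he => hsE e he.1)).1

lemma adj_of_isClosedVE_sdiff_insert_edge [Fintype V] (hG : IsTriconnected G)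
    (hQ : IsClosedVE G (A \ {y}) (insert s(x, y) E) Q) (hcard : A.ncard + E.ncard = 3)
    (hyA : y ∈ A) (hu : u ∈ Q) (huA : u ∉ A) (hwQ : w ∉ Q) (hwA : w ∉ A)
    (hwE : ∀ e ∈ E, w ∉ e) : G.Adj x y := by
  by_contra hxy
  have hcard' : (A \ {y}).ncard + E.ncard ≤ 2 := by
    have := Set.ncard_sdiff_singleton_add_one hyA
    omega
  exact hwQ (hG.mem_of_isClosedVE (hQ.of_insert_of_not_adj hxy) hcard' hu (fun h => huA h.1)
    (fun h => hwA h.1) hwE)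

lemma forall_notMem_of_inter_eq_singleton (hx : S ∩ (H ∪ (A ∪ {v | ∃ e ∈ E, v ∈ e})) = {x}) :
    ∀ s ∈ S, s ≠ x → s ∉ H ∧ s ∉ A ∧ ∀ e ∈ E, s ∉ e := by
  intro s hs hsx
  have hmem : s ∈ S ∩ (H ∪ (A ∪ {v | ∃ e ∈ E, v ∈ e})) → s = x :=
    fun h => Set.mem_singleton_iff.mp (hx ▸ h)
  exact ⟨fun h => hsx (hmem ⟨hs, .inl h⟩), fun h => hsx (hmem ⟨hs, .inr (.inl h)⟩),
    fun e he hse => hsx (hmem ⟨hs, .inr (.inr ⟨e, he, hse⟩)⟩)⟩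

theorem stmt_13_general [Fintype V] (G : SimpleGraph V)
    (htri : IsTriconnected G)
    (A : Set V) (E : Set (Sym2 V))
    (hcard : A.ncard + E.ncard = 3)
    (H₂ : Set V) (hH₂ : IsCompVE G A E H₂)
    (hnt₂ : ∀ v : V, H₂ ≠ {v})
    (W T₂ : Set V)
    (hW : W = A ∪ {v | ∃ e ∈ E, v ∈ e})
    (hT₂ : T₂ = A ∪ {v ∈ H₂ | ∃ e ∈ E, v ∈ e})
    (S : Set V) (hS : IsThreeCutset G S)
    (x : V) (hx : S ∩ (H₂ ∪ W) = {x})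
    (y : V) (hy : y ∈ T₂) (hyS : y ∉ S)
    (hsep : ∀ z ∈ T₂, z ∉ S → z ≠ y → ¬ ReachOutside G S y z) :
    G.Adj x y ∧
      ((x ∈ A ∧ CutVE G (A \ {x}) (insert s(x, y) E)) ∨
        (y ∈ A ∧ CutVE G (A \ {y}) (insert s(x, y) E))) := by
  subst hW hT₂
  have hxS : x ∈ S := (hx.symm ▸ Set.mem_singleton x : x ∈ S ∩ _).1
  have hSx := forall_notMem_of_inter_eq_singleton hx
  obtain ⟨s, hsS, hsx⟩ : ∃ s ∈ S, s ≠ x :=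
    Set.exists_ne_of_one_lt_ncard (by rw [hS.1]; norm_num) x
  have hsepC : ∀ z ∈ A ∪ {v ∈ H₂ | ∃ e ∈ E, v ∈ e}, z ≠ y → z ∉ compVE G S ∅ y :=
    fun z hz hzy hzC => hsep z hz (notMem_of_mem_compVE hzC) hzy (reachOutside_iff_reachVE.mpr hzC)
  have hET : ∀ p ∈ H₂, ∀ v, s(p, v) ∈ E → p ∈ A ∪ {v ∈ H₂ | ∃ e ∈ E, v ∈ e} :=
    fun p hp v he => .inr ⟨hp, _, he, Sym2.mem_mk_left p v⟩
  have hCH := compVE_inter_subset_singleton htri hH₂.isClosedVE Set.subset_union_left hET hsepC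
    hSx hxS hyS ⟨s, hsS, hsx⟩
  have hyH := notMem_of_compVE_inter_subset_singleton htri hH₂ hnt₂ hcard Set.subset_union_left
    hsepC hSx hxS hyS ⟨s, hsS, hsx⟩ hCH
  have hyA : y ∈ A := hy.resolve_right fun h => hyH h.1
  have hNy : ∀ p ∈ H₂, G.Adj p y → p = x := by
    by_contra! ⟨p, hpH, hadj, hpx⟩
    have hpC := isClosedVE_compVE.mem_of_adj (mem_compVE_self hyS) hadj.symm
      fun h => (hSx p h hpx).1 hpH
    exact hyH (hCH ⟨hpC, hpH⟩ ▸ hpH)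
  have hclosed := hH₂.isClosedVE.sdiff_insert_edge hNy
  obtain ⟨u, hu, rfl⟩ := id hH₂
  have huH : u ∈ compVE G A E u := mem_compVE_self hu
  obtain ⟨hsH, hsA, hsE⟩ := hSx s hsS hsx
  exact ⟨adj_of_isClosedVE_sdiff_insert_edge htri hclosed hcard hyA huH hu hsH hsA hsE,
    .inr ⟨hyA, hclosed.cutVE huH (fun h => hu h.1) hyH fun h => h.2 rfl⟩⟩

/-- Corollary `l30c1`: under the given hypotheses the cut `M = (A, E)` can be
complemented by the edge `xy`. -/
theorem stmt_13 [Fintype V] (G : SimpleGraph V)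
    (htri : IsTriconnected G) (hbig : 6 < Fintype.card V)
    (A : Set V) (E : Set (Sym2 V))
    (hcard : A.ncard + E.ncard = 3) (hEsub : E ⊆ G.edgeSet)
    (hEne : E.Nonempty) (hcut : CutVE G A E)
    (H₁ H₂ : Set V) (hH₁ : IsCompVE G A E H₁) (hH₂ : IsCompVE G A E H₂)
    (hHne : H₁ ≠ H₂) (hcover : ∀ v, v ∉ A → v ∈ H₁ ∪ H₂)
    (hnt₁ : ∀ v : V, H₁ ≠ {v}) (hnt₂ : ∀ v : V, H₂ ≠ {v})
    (W T₂ : Set V)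
    (hW : W = A ∪ {v | ∃ e ∈ E, v ∈ e})
    (hT₂ : T₂ = A ∪ {v ∈ H₂ | ∃ e ∈ E, v ∈ e})
    (hT₂cut : IsThreeCutset G T₂)
    (S : Set V) (hS : IsThreeCutset G S) (hdep : Dependent G S T₂)
    (x : V) (hx : S ∩ (H₂ ∪ W) = {x})
    (y : V) (hy : y ∈ T₂) (hyS : y ∉ S)
    (hsep : ∀ z ∈ T₂, z ∉ S → z ≠ y → ¬ ReachOutside G S y z) :
    G.Adj x y ∧
      ((x ∈ A ∧ CutVE G (A \ {x}) (insert s(x, y) E)) ∨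
        (y ∈ A ∧ CutVE G (A \ {y}) (insert s(x, y) E))) :=
  stmt_13_general G htri A E hcard H₂ hH₂ hnt₂ W T₂ hW hT₂ S hS x hx y hy hyS hsep

end Paper
end
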